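/- arXiv:1410.2633 — 7 statements merged into one kernel-verified Lean document; each statement's English description precedes it below -/
import Mathlib

section
/- Let f : ℝ → ℝ be four times continuously differentiable on an open set D, with a simple zero x* ∈ D, and let G : ℝ → ℝ be three times continuously differentiable with G(0) = 1 and G'(0) = 2. Define for x near x*, x ≠ x*, the map Φ(x) = y(x) − G(f(y(x))/f(x))·f(y(x))/f'(x) where y(x) = x − f(x)/f'(x). Then (Φ(x) − x*)/(x − x*)⁴ tends to −c₂c₃ + c₂³·(5 − G''(0)/2) as x → x*. -/
open Filter Topology Asymptotics

/-- `c f xs k = f⁽ᵏ⁾(xs) / (k! f'(xs))`. -/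
noncomputable def c (f : ℝ → ℝ) (xs : ℝ) (k : ℕ) : ℝ :=
  iteratedDeriv k f xs / ((Nat.factorial k : ℝ) * deriv f xs)

/-- The two-point iteration map `Φ`. -/
noncomputable def Phi (f G : ℝ → ℝ) (x : ℝ) : ℝ :=
  let y := x - f x / deriv f x
  y - G (f y / f x) * (f y / deriv f x)

lemma abs_sub_le_of_uIcc {a x t : ℝ} (ht : t ∈ Set.uIcc a x) : |t - a| ≤ |x - a| := by
  rcases le_total a x with h | h
  · rw [Set.uIcc_of_le h] at ht
    rw [abs_of_nonneg (by linarith [ht.1]), abs_of_nonneg (by linarith)]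
    linarith [ht.2]
  · rw [Set.uIcc_of_ge h] at ht
    rw [abs_of_nonpos (by linarith [ht.2]), abs_of_nonpos (by linarith)]
    linarith [ht.1]

lemma taylor_peano {D : Set ℝ} (hD : IsOpen D) {a : ℝ} (ha : a ∈ D) :
    ∀ (n : ℕ), 1 ≤ n → ∀ {f : ℝ → ℝ}, ContDiffOn ℝ n f D →
    (fun x => f x - ∑ k ∈ Finset.range (n+1),
        iteratedDeriv k f a / (Nat.factorial k : ℝ) * (x-a)^k)
      =o[𝓝 a] fun x => (x-a)^n := by
  intro n
  induction n with
  | zero => omega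
  | succ m ih =>
    intro _ f hf
    rcases Nat.eq_zero_or_pos m with hm | hm
    · subst hm
      have hdiff : DifferentiableAt ℝ f a :=
        (hf.differentiableOn (by norm_num)).differentiableAt (hD.mem_nhds ha)
      have h := hasDerivAt_iff_isLittleO.mp hdiff.hasDerivAt
      refine h.congr' ?_ ?_
      · filter_upwards with x
        simp [Finset.sum_range_succ, iteratedDeriv_zero, iteratedDeriv_one, Nat.factorial]
        ring
      · filter_upwards with x; simp
    · have hf' : ContDiffOn ℝ m (deriv f) D := by
        apply hf.deriv_of_isOpen hD
        exact_mod_cast le_refl (m + 1)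
      have ihd := ih hm hf'
      have ihd2 : (fun x => deriv f x - ∑ k ∈ Finset.range (m+1),
          iteratedDeriv (k+1) f a / (Nat.factorial k : ℝ) * (x-a)^k)
          =o[𝓝 a] fun x => (x-a)^m := by
        refine ihd.congr' ?_ (by rfl)
        filter_upwards with x
        congr 1
        refine Finset.sum_congr rfl fun k _ => ?_
        rw [← iteratedDeriv_succ']
      set g : ℝ → ℝ := fun x => f x - ∑ k ∈ Finset.range (m+2),
        iteratedDeriv k f a / (Nat.factorial k : ℝ) * (x-a)^k with hg
      set g' : ℝ → ℝ := fun x => deriv f x - ∑ k ∈ Finset.range (m+1),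
        iteratedDeriv (k+1) f a / (Nat.factorial k : ℝ) * (x-a)^k with hg'
      have hga : g a = 0 := by
        rw [hg]
        simp only [sub_self]
        rw [Finset.sum_eq_single 0]
        · simp [iteratedDeriv_zero]
        · intro k _ hk
          simp [zero_pow hk]
        · simp
      have hderiv : ∀ x ∈ D, HasDerivAt g (g' x) x := by
        intro x hx
        have hfd : HasDerivAt f (deriv f x) x :=
          ((hf.differentiableOn (by simp)).differentiableAt
            (hD.mem_nhds hx)).hasDerivAt
        have hpoly : HasDerivAt (fun x => ∑ k ∈ Finset.range (m+2),
            iteratedDeriv k f a / (Nat.factorial k : ℝ) * (x-a)^k)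
            (∑ k ∈ Finset.range (m+2),
              iteratedDeriv k f a / (Nat.factorial k : ℝ) * (k * (x-a)^(k-1))) x := by
          refine HasDerivAt.fun_sum fun k _ => ?_
          have h1 : HasDerivAt (fun x : ℝ => (x-a)^k) (k * (x-a)^(k-1)) x := by
            simpa using ((hasDerivAt_id x).sub_const a).fun_pow k
          simpa using h1.const_mul (iteratedDeriv k f a / (Nat.factorial k : ℝ))
        have hder := hfd.sub hpoly
        have hsum : (∑ k ∈ Finset.range (m+2),
              iteratedDeriv k f a / (Nat.factorial k : ℝ) * (↑k * (x-a)^(k-1)))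
            = ∑ k ∈ Finset.range (m+1),
              iteratedDeriv (k+1) f a / (Nat.factorial k : ℝ) * (x-a)^k := by
          rw [Finset.sum_range_succ']
          simp only [Nat.cast_zero, zero_mul, mul_zero, add_zero]
          refine Finset.sum_congr rfl fun k _ => ?_
          rw [Nat.factorial_succ]
          have hk : (Nat.factorial k : ℝ) ≠ 0 := Nat.cast_ne_zero.mpr (Nat.factorial_ne_zero k)
          push_cast
          field_simp
        have hgx : g' x = deriv f x - ∑ k ∈ Finset.range (m+2),
            iteratedDeriv k f a / (Nat.factorial k : ℝ) * (↑k * (x-a)^(k-1)) := by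
          simp only [hg']
          rw [hsum]
        rw [hgx]
        exact hder
      rw [isLittleO_iff]
      intro ε hε
      have hsmall := (isLittleO_iff.mp ihd2) hε
      have hDn : ∀ᶠ x in 𝓝 a, x ∈ D := hD.eventually_mem ha
      have hcomb := hsmall.and hDn
      rw [Metric.eventually_nhds_iff] at hcomb ⊢
      obtain ⟨δ, hδ, hball⟩ := hcomb
      refine ⟨δ, hδ, fun {x} hxδ => ?_⟩
      have hsub : Set.uIcc a x ⊆ Metric.ball a δ := by
        intro t ht
        have := abs_sub_le_of_uIcc ht
        rw [Metric.mem_ball, Real.dist_eq]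
        rw [Real.dist_eq] at hxδ
        calc |t - a| ≤ |x - a| := this
        _ < δ := hxδ
      have hbound : ∀ t ∈ Set.uIcc a x, ‖g' t‖ ≤ ε * |x - a|^m := by
        intro t ht
        have h1 := hball (hsub ht)
        calc ‖g' t‖ ≤ ε * ‖(t-a)^m‖ := h1.1
        _ = ε * |t-a|^m := by rw [Real.norm_eq_abs, abs_pow]
        _ ≤ ε * |x-a|^m := by
            apply mul_le_mul_of_nonneg_left _ hε.le
            exact pow_le_pow_left₀ (abs_nonneg _) (abs_sub_le_of_uIcc ht) m
      have hderivW : ∀ t ∈ Set.uIcc a x, HasDerivWithinAt g (g' t) (Set.uIcc a x) t :=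
        fun t ht => (hderiv t ((hball (hsub ht)).2)).hasDerivWithinAt
      have key := (convex_uIcc a x).norm_image_sub_le_of_norm_hasDerivWithin_le
        hderivW hbound Set.left_mem_uIcc Set.right_mem_uIcc
      rw [hga, sub_zero] at key
      calc ‖g x‖ ≤ ε * |x-a|^m * ‖x - a‖ := key
      _ = ε * ‖(x-a)^(m+1)‖ := by
          rw [Real.norm_eq_abs, Real.norm_eq_abs, abs_pow, pow_succ]; ring

lemma key_alg (e c2 q g2 M K L B D1 D2 : ℝ) (he : e ≠ 0) (h1 : D1 ≠ 0) (h2 : D2 ≠ 0)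
    (hB : D2 = 1 + 2*c2*e + e^2*B) (hL : c2*D1*D2 - M = e*L) :
    M - (1 + 2*e*((M/D2 + e^2*K)/D1) + g2*e^2*((M/D2 + e^2*K)/D1)^2 + e^2*q)*(M/D2 + e^2*K)
      = e^2*(M*B/D2 + 2*M*L/(D1*D2^2) - K - 4*e*K*M/(D1*D2) - 2*e^3*K^2/D1
          - (g2*((M/D2 + e^2*K)/D1)^2 + q)*(M/D2 + e^2*K)) := by
  have hBe : B = (D2 - 1 - 2*c2*e)/e^2 := by rw [hB]; field_simp; ring
  have hLe : L = (c2*D1*D2 - M)/e := by rw [hL]; field_simp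
  rw [hBe, hLe]
  field_simp
  ring

set_option maxHeartbeats 4000000 in
/-- Asymptotic error constant of the two-point method:
`(Φ(x) - xs)/(x - xs)⁴ → -c₂ c₃ + c₂³ (5 - G''(0)/2)` as `x → xs`, `x ≠ xs`. -/
theorem two_point_error_constant
    (D : Set ℝ) (hD : IsOpen D) (f : ℝ → ℝ) (xs : ℝ) (hxs : xs ∈ D)
    (hf : ContDiffOn ℝ 4 f D) (hf0 : f xs = 0) (hf1 : deriv f xs ≠ 0)
    (G : ℝ → ℝ) (hG : ContDiff ℝ 3 G) (hG0 : G 0 = 1) (hG1 : deriv G 0 = 2) :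
    Tendsto (fun x : ℝ => (Phi f G x - xs) / (x - xs) ^ 4) (𝓝[≠] xs)
      (𝓝 (-(c f xs 2) * c f xs 3 + (c f xs 2) ^ 3 * (5 - iteratedDeriv 2 G 0 / 2))) := by
  set l := 𝓝[≠] xs with hl
  set A := deriv f xs with hA_def
  have hA : A ≠ 0 := hf1
  set c2 := c f xs 2 with hc2_def
  set c3 := c f xs 3 with hc3_def
  set c4 := c f xs 4 with hc4_def
  set g2 := iteratedDeriv 2 G 0 / 2 with hg2_def
  -- iterated derivative values
  have hfact : ∀ k : ℕ, (Nat.factorial k : ℝ) ≠ 0 :=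
    fun k => Nat.cast_ne_zero.mpr (Nat.factorial_ne_zero k)
  have hiD1 : iteratedDeriv 1 f xs = A := by rw [iteratedDeriv_one, hA_def]
  have hiD2 : iteratedDeriv 2 f xs = 2*A*c2 := by
    rw [hc2_def]; simp only [c, ← hA_def, Nat.factorial]; field_simp; ring
  have hiD3 : iteratedDeriv 3 f xs = 6*A*c3 := by
    rw [hc3_def]; simp only [c, ← hA_def, Nat.factorial]; field_simp; ring
  have hiD4 : iteratedDeriv 4 f xs = 24*A*c4 := by
    rw [hc4_def]; simp only [c, ← hA_def, Nat.factorial]; field_simp; ring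
  have hiDG2 : iteratedDeriv 2 G 0 = 2*g2 := by rw [hg2_def]; ring
  -- the function definitions
  obtain ⟨yF, hyF⟩ : ∃ v : ℝ → ℝ, v = fun x => x - f x / deriv f x := ⟨_, rfl⟩
  obtain ⟨r1F, hr1F⟩ : ∃ v : ℝ → ℝ, v = fun x =>
    (f x - A*(x - xs) - A*c2*(x - xs)^2 - A*c3*(x - xs)^3 - A*c4*(x - xs)^4) / (x - xs)^4 / A
    := ⟨_, rfl⟩
  obtain ⟨r2F, hr2F⟩ : ∃ v : ℝ → ℝ, v = fun x =>
    (deriv f x - A - 2*A*c2*(x - xs) - 3*A*c3*(x - xs)^2 - 4*A*c4*(x - xs)^3) / (x - xs)^3 / A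
    := ⟨_, rfl⟩
  obtain ⟨sF, hsF⟩ : ∃ v : ℝ → ℝ, v = fun x =>
    (f (yF x) - A*(yF x - xs) - A*c2*(yF x - xs)^2) / (x - xs)^4 / A := ⟨_, rfl⟩
  obtain ⟨qF, hqF⟩ : ∃ v : ℝ → ℝ, v = fun x =>
    (G (f (yF x) / f x) - 1 - 2*(f (yF x) / f x) - g2*(f (yF x) / f x)^2) / (x - xs)^2 := ⟨_, rfl⟩
  obtain ⟨D1F, hD1F⟩ : ∃ v : ℝ → ℝ, v = fun x =>
    1 + c2*(x-xs) + c3*(x-xs)^2 + c4*(x-xs)^3 + (x-xs)^3*r1F x := ⟨_, rfl⟩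
  obtain ⟨D2F, hD2F⟩ : ∃ v : ℝ → ℝ, v = fun x =>
    1 + 2*c2*(x-xs) + 3*c3*(x-xs)^2 + 4*c4*(x-xs)^3 + (x-xs)^3*r2F x := ⟨_, rfl⟩
  obtain ⟨MF, hMF⟩ : ∃ v : ℝ → ℝ, v = fun x =>
    c2 + 2*c3*(x-xs) + 3*c4*(x-xs)^2 + (x-xs)^2*(r2F x - r1F x) := ⟨_, rfl⟩
  obtain ⟨BF, hBF⟩ : ∃ v : ℝ → ℝ, v = fun x => 3*c3 + 4*c4*(x-xs) + (x-xs)*r2F x := ⟨_, rfl⟩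
  obtain ⟨LF, hLF⟩ : ∃ v : ℝ → ℝ, v = fun x =>
    3*c2^2 - 2*c3
    + (x-xs)*(r1F x - r2F x - 3*c4 + 4*c2*c3 + 2*c2^3)
    + (x-xs)^2*(c2*r2F x + c2*r1F x + 5*c2*c4 + 5*c2^2*c3)
    + (x-xs)^3*(3*c2*c3^2 + c2^2*r2F x + 2*c2^2*r1F x + 6*c2^2*c4)
    + (x-xs)^4*(c2*c3*r2F x + 3*c2*c3*r1F x + 7*c2*c3*c4)
    + (x-xs)^5*(c2*r1F x*r2F x + c2*c4*r2F x + 4*c2*c4*r1F x + 4*c2*c4^2) := ⟨_, rfl⟩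
  obtain ⟨KF, hKF⟩ : ∃ v : ℝ → ℝ, v = fun x => c2*(MF x)^2/(D2F x)^2 + sF x := ⟨_, rfl⟩
  obtain ⟨FF, hFF⟩ : ∃ v : ℝ → ℝ, v = fun x => MF x/(D2F x) + (x-xs)^2*KF x := ⟨_, rfl⟩
  obtain ⟨UF, hUF⟩ : ∃ v : ℝ → ℝ, v = fun x => FF x/(D1F x) := ⟨_, rfl⟩
  obtain ⟨VF, hVF⟩ : ∃ v : ℝ → ℝ, v = fun x =>
    MF x*BF x/D2F x + 2*MF x*LF x/(D1F x*(D2F x)^2) - KF x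
    - 4*(x-xs)*KF x*MF x/(D1F x*D2F x) - 2*(x-xs)^3*(KF x)^2/(D1F x)
    - (g2*(UF x)^2 + qF x)*FF x := ⟨_, rfl⟩
  -- basic limits
  have he0 : Tendsto (fun x : ℝ => x - xs) l (𝓝 0) := by
    have h : Tendsto (fun x : ℝ => x - xs) (𝓝 xs) (𝓝 (xs - xs)) :=
      (continuous_id.sub continuous_const).tendsto xs
    rw [sub_self] at h
    exact h.mono_left nhdsWithin_le_nhds
  have heene : ∀ᶠ x in l, x - xs ≠ 0 := by
    filter_upwards [self_mem_nhdsWithin] with x hx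
    exact sub_ne_zero.mpr hx
  have hf4 : ContDiffOn ℝ (4:ℕ) f D := by exact_mod_cast hf
  have hf3' : ContDiffOn ℝ (3:ℕ) (deriv f) D := by
    apply hf.deriv_of_isOpen hD
    norm_num
  have hfC : ContinuousOn f D := hf.continuousOn
  have hf'C : ContinuousOn (deriv f) D := hf3'.continuousOn
  have hftend : Tendsto f l (𝓝 0) := by
    have h := (hfC.continuousAt (hD.mem_nhds hxs)).tendsto
    rw [hf0] at h
    exact h.mono_left nhdsWithin_le_nhds
  have hf'tend : Tendsto (deriv f) l (𝓝 A) := by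
    have h := (hf'C.continuousAt (hD.mem_nhds hxs)).tendsto
    rw [← hA_def] at h
    exact h.mono_left nhdsWithin_le_nhds
  have hytend : Tendsto yF l (𝓝 xs) := by
    rw [hyF]
    have h : Tendsto (fun x => x - f x / deriv f x) l (𝓝 (xs - 0 / A)) :=
      (tendsto_id.mono_left nhdsWithin_le_nhds).sub (hftend.div hf'tend hA)
    simpa using h
  -- Peano expansions
  have hP4 : (fun x => f x - A*(x - xs) - A*c2*(x - xs)^2 - A*c3*(x - xs)^3 - A*c4*(x - xs)^4)
      =o[𝓝 xs] fun x => (x - xs)^4 := by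
    have h := taylor_peano hD hxs 4 (by norm_num) hf4
    refine h.congr' ?_ (by rfl)
    filter_upwards with x
    simp only [Finset.sum_range_succ, Finset.sum_range_zero, iteratedDeriv_zero,
      hf0, hiD1, hiD2, hiD3, hiD4, Nat.factorial]
    push_cast
    ring
  have hP3 : (fun x => deriv f x - A - 2*A*c2*(x - xs) - 3*A*c3*(x - xs)^2 - 4*A*c4*(x - xs)^3)
      =o[𝓝 xs] fun x => (x - xs)^3 := by
    have h := taylor_peano hD hxs 3 (by norm_num) hf3'
    have e0 : iteratedDeriv 0 (deriv f) xs = A := by rw [iteratedDeriv_zero, hA_def]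
    have e1 : iteratedDeriv 1 (deriv f) xs = 2*A*c2 := by
      rw [← iteratedDeriv_succ', hiD2]
    have e2 : iteratedDeriv 2 (deriv f) xs = 6*A*c3 := by
      rw [← iteratedDeriv_succ', hiD3]
    have e3 : iteratedDeriv 3 (deriv f) xs = 24*A*c4 := by
      rw [← iteratedDeriv_succ', hiD4]
    refine h.congr' ?_ (by rfl)
    filter_upwards with x
    simp only [Finset.sum_range_succ, Finset.sum_range_zero, iteratedDeriv_zero,
      e0, e1, e2, e3, Nat.factorial]
    push_cast
    ring
  have hP2 : (fun w => f w - A*(w - xs) - A*c2*(w - xs)^2) =o[𝓝 xs] fun w => (w - xs)^2 := by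
    have h := taylor_peano hD hxs 2 (by norm_num) (hf4.of_le (by norm_num))
    refine h.congr' ?_ (by rfl)
    filter_upwards with x
    simp only [Finset.sum_range_succ, Finset.sum_range_zero, iteratedDeriv_zero,
      hf0, hiD1, hiD2, Nat.factorial]
    push_cast
    ring
  have hPG : (fun t => G t - 1 - 2*t - g2*t^2) =o[𝓝 (0:ℝ)] fun t => t^2 := by
    have h := taylor_peano isOpen_univ (Set.mem_univ (0:ℝ)) 2 (by norm_num)
      ((hG.of_le (by norm_num)).contDiffOn (s := Set.univ))
    refine h.congr' ?_ ?_
    · filter_upwards with t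
      simp only [Finset.sum_range_succ, Finset.sum_range_zero, iteratedDeriv_zero,
        iteratedDeriv_one, hG0, hG1, hiDG2, Nat.factorial]
      push_cast
      ring
    · filter_upwards with t; rw [sub_zero]
  -- remainder limits
  have hr1tend : Tendsto r1F l (𝓝 0) := by
    rw [hr1F]
    rw [hl]
    have h := ((hP4.tendsto_div_nhds_zero).mono_left
      (nhdsWithin_le_nhds (s := {xs}ᶜ))).div_const A
    simpa using h
  have hr2tend : Tendsto r2F l (𝓝 0) := by
    rw [hr2F]
    rw [hl]
    have h := ((hP3.tendsto_div_nhds_zero).mono_left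
      (nhdsWithin_le_nhds (s := {xs}ᶜ))).div_const A
    simpa using h
  -- limits of D1, D2, M
  have hD1tend : Tendsto D1F l (𝓝 1) := by
    rw [hD1F]
    have h : Tendsto (fun x => 1 + c2*(x-xs) + c3*(x-xs)^2 + c4*(x-xs)^3 + (x-xs)^3*r1F x) l
        (𝓝 (1 + c2*0 + c3*0^2 + c4*0^3 + 0^3*0)) :=
      (((tendsto_const_nhds.add (he0.const_mul c2)).add ((he0.pow 2).const_mul c3)).add
        ((he0.pow 3).const_mul c4)).add ((he0.pow 3).mul hr1tend)
    norm_num at h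
    convert h using 2 <;> ring
  have hD2tend : Tendsto D2F l (𝓝 1) := by
    rw [hD2F]
    have h : Tendsto (fun x => 1 + 2*c2*(x-xs) + 3*c3*(x-xs)^2 + 4*c4*(x-xs)^3 + (x-xs)^3*r2F x) l
        (𝓝 (1 + 2*c2*0 + 3*c3*0^2 + 4*c4*0^3 + 0^3*0)) :=
      (((tendsto_const_nhds.add (he0.const_mul (2*c2))).add ((he0.pow 2).const_mul (3*c3))).add
        ((he0.pow 3).const_mul (4*c4))).add ((he0.pow 3).mul hr2tend)
    norm_num at h
    convert h using 2 <;> ring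
  have hMtend : Tendsto MF l (𝓝 c2) := by
    rw [hMF]
    have h : Tendsto (fun x => c2 + 2*c3*(x-xs) + 3*c4*(x-xs)^2 + (x-xs)^2*(r2F x - r1F x)) l
        (𝓝 (c2 + 2*c3*0 + 3*c4*0^2 + 0^2*(0 - 0))) :=
      ((tendsto_const_nhds.add (he0.const_mul (2*c3))).add ((he0.pow 2).const_mul (3*c4))).add
        ((he0.pow 2).mul (hr2tend.sub hr1tend))
    norm_num at h
    convert h using 2 <;> ring
  have hD1ne : ∀ᶠ x in l, D1F x ≠ 0 := hD1tend.eventually_ne one_ne_zero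
  have hD2ne : ∀ᶠ x in l, D2F x ≠ 0 := hD2tend.eventually_ne one_ne_zero
  have hf'ne : ∀ᶠ x in l, deriv f x ≠ 0 := hf'tend.eventually_ne hA
  have hMrel : ∀ x : ℝ, D2F x - D1F x = (x - xs) * MF x := by
    intro x; simp only [hD2F, hD1F, hMF]; ring
  have hBrel : ∀ x : ℝ, D2F x = 1 + 2*c2*(x-xs) + (x-xs)^2 * BF x := by
    intro x; simp only [hD2F, hBF]; ring
  have hLrel : ∀ x : ℝ, c2 * D1F x * D2F x - MF x = (x - xs) * LF x := by
    intro x; simp only [hD1F, hD2F, hMF, hLF]; ring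
  -- pointwise identities
  have hD1eq : ∀ᶠ x in l, D1F x = f x / (A*(x - xs)) := by
    filter_upwards [heene] with x hx
    rw [hD1F, hr1F]
    field_simp
    ring
  have hD2eq : ∀ᶠ x in l, D2F x = deriv f x / A := by
    filter_upwards [heene] with x hx
    rw [hD2F, hr2F]
    field_simp
    ring
  have hfne : ∀ᶠ x in l, f x ≠ 0 := by
    filter_upwards [hD1ne, hD1eq, heene] with x h1 h2 h3
    intro hc
    rw [h2, hc] at h1
    simp at h1
  have hfxeq : ∀ᶠ x in l, f x = A * (x - xs) * D1F x := by
    filter_upwards [heene] with x hx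
    simp only [hD1F, hr1F]
    field_simp
    ring
  have hfdeq : ∀ᶠ x in l, deriv f x = A * D2F x := by
    filter_upwards [heene] with x hx
    simp only [hD2F, hr2F]
    field_simp
    ring
  have hyeq : ∀ᶠ x in l, yF x - xs = (x-xs)^2 * (MF x / D2F x) := by
    filter_upwards [heene, hD2ne, hfxeq, hfdeq] with x hx h2n hfx hfd
    have h0 : yF x - xs = (x - xs) - f x / deriv f x := by simp only [hyF]; ring
    have hD1 : D1F x = D2F x - (x-xs)*MF x := by linarith [hMrel x]
    rw [h0, hfx, hfd, hD1]
    field_simp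
    ring
  have hMD2tend : Tendsto (fun x => MF x / D2F x) l (𝓝 c2) := by
    have h := hMtend.div hD2tend one_ne_zero
    rw [div_one] at h; exact h
  -- s limit
  have hstend : Tendsto sF l (𝓝 0) := by
    have hcomp : (fun x => f (yF x) - A*(yF x - xs) - A*c2*(yF x - xs)^2)
        =o[l] fun x => (yF x - xs)^2 := hP2.comp_tendsto hytend
    have hbig : (fun x => (yF x - xs)^2) =O[l] fun x => (x - xs)^4 := by
      rw [isBigO_iff]
      refine ⟨(|c2|+1)^2, ?_⟩
      filter_upwards [hyeq, (hMD2tend.abs).eventually_lt_const (by linarith [abs_nonneg c2] : |c2| < |c2|+1)]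
        with x h1 h2
      rw [h1, Real.norm_eq_abs, Real.norm_eq_abs]
      have h3 : |((x-xs)^2 * (MF x / D2F x))^2| = (MF x / D2F x)^2 * (x-xs)^4 := by
        rw [abs_of_nonneg (by positivity)]
        ring
      rw [h3, abs_of_nonneg (by positivity : (0:ℝ) ≤ (x-xs)^4)]
      have h4 : (MF x / D2F x)^2 ≤ (|c2|+1)^2 := by
        rw [← sq_abs]
        exact pow_le_pow_left₀ (abs_nonneg _) h2.le 2
      nlinarith [pow_nonneg (sq_nonneg (x-xs)) 2, sq_nonneg (x-xs)]
    have h := (hcomp.trans_isBigO hbig).tendsto_div_nhds_zero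
    rw [hsF]
    have h2 := h.div_const A
    simpa using h2
  -- K, F, U limits
  have hKtend : Tendsto KF l (𝓝 (c2^3)) := by
    rw [hKF]
    have h : Tendsto (fun x => c2*(MF x)^2/(D2F x)^2 + sF x) l (𝓝 (c2*c2^2/1^2 + 0)) :=
      (((hMtend.pow 2).const_mul c2).div (hD2tend.pow 2) (by norm_num)).add hstend
    norm_num at h
    convert h using 2 <;> ring
  have hFtend : Tendsto FF l (𝓝 c2) := by
    rw [hFF]
    have h : Tendsto (fun x => MF x/(D2F x) + (x-xs)^2*KF x) l (𝓝 (c2/1 + 0^2*c2^3)) :=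
      (hMtend.div hD2tend one_ne_zero).add ((he0.pow 2).mul hKtend)
    norm_num at h
    exact h
  have hUtend : Tendsto UF l (𝓝 c2) := by
    rw [hUF]
    have h : Tendsto (fun x => FF x/(D1F x)) l (𝓝 (c2/1)) := hFtend.div hD1tend one_ne_zero
    norm_num at h
    exact h
  -- u = f(y)/f x identity and limit
  have hfyeq : ∀ᶠ x in l, f (yF x) = A * (x - xs)^2 * FF x := by
    filter_upwards [heene, hD2ne, hyeq] with x hx h2n hy
    have hs' : f (yF x) = A*(yF x - xs) + A*c2*(yF x - xs)^2 + A*(x-xs)^4*sF x := by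
      simp only [hsF]
      field_simp
      ring
    rw [hs', hy]
    simp only [hFF, hKF]
    field_simp
    ring
  have hueq : ∀ᶠ x in l, f (yF x) / f x = (x - xs) * UF x := by
    filter_upwards [heene, hfne, hD1ne, hfxeq, hfyeq] with x hx hfx h1n hfx2 hfy
    rw [hfy, hfx2]
    simp only [hUF]
    field_simp
  have hutend : Tendsto (fun x => f (yF x) / f x) l (𝓝 0) := by
    have h : Tendsto (fun x => (x - xs) * UF x) l (𝓝 (0 * c2)) := he0.mul hUtend
    rw [zero_mul] at h
    exact h.congr' (by filter_upwards [hueq] with x hx; rw [hx])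
  -- q limit
  have hqtend : Tendsto qF l (𝓝 0) := by
    have hcomp : (fun x => G (f (yF x) / f x) - 1 - 2*(f (yF x) / f x) - g2*(f (yF x) / f x)^2)
        =o[l] fun x => (f (yF x) / f x)^2 := hPG.comp_tendsto hutend
    have hbig : (fun x => (f (yF x) / f x)^2) =O[l] fun x => (x - xs)^2 := by
      rw [isBigO_iff]
      refine ⟨(|c2|+1)^2, ?_⟩
      filter_upwards [hueq, (hUtend.abs).eventually_lt_const
        (by linarith [abs_nonneg c2] : |c2| < |c2|+1)] with x h1 h2
      rw [h1, Real.norm_eq_abs, Real.norm_eq_abs]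
      have h3 : |((x-xs) * UF x)^2| = (UF x)^2 * (x-xs)^2 := by
        rw [abs_of_nonneg (by positivity)]
        ring
      rw [h3, abs_of_nonneg (by positivity : (0:ℝ) ≤ (x-xs)^2)]
      have h4 : (UF x)^2 ≤ (|c2|+1)^2 := by
        rw [← sq_abs]
        exact pow_le_pow_left₀ (abs_nonneg _) h2.le 2
      nlinarith [sq_nonneg (x-xs)]
    have h := (hcomp.trans_isBigO hbig).tendsto_div_nhds_zero
    rw [hqF]
    exact h
  -- remaining polynomial limits
  have hBtend : Tendsto BF l (𝓝 (3*c3)) := by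
    rw [hBF]
    have h : Tendsto (fun x => 3*c3 + 4*c4*(x-xs) + (x-xs)*r2F x) l
        (𝓝 (3*c3 + 4*c4*0 + 0*0)) :=
      (tendsto_const_nhds.add (he0.const_mul (4*c4))).add (he0.mul hr2tend)
    norm_num at h
    convert h using 2 <;> ring
  have hLtend : Tendsto LF l (𝓝 (3*c2^2 - 2*c3)) := by
    rw [hLF]
    have h : Tendsto (fun x =>
        3*c2^2 - 2*c3
        + (x-xs)*(r1F x - r2F x - 3*c4 + 4*c2*c3 + 2*c2^3)
        + (x-xs)^2*(c2*r2F x + c2*r1F x + 5*c2*c4 + 5*c2^2*c3)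
        + (x-xs)^3*(3*c2*c3^2 + c2^2*r2F x + 2*c2^2*r1F x + 6*c2^2*c4)
        + (x-xs)^4*(c2*c3*r2F x + 3*c2*c3*r1F x + 7*c2*c3*c4)
        + (x-xs)^5*(c2*r1F x*r2F x + c2*c4*r2F x + 4*c2*c4*r1F x + 4*c2*c4^2)) l
        (𝓝 (3*c2^2 - 2*c3
        + 0*(0 - 0 - 3*c4 + 4*c2*c3 + 2*c2^3)
        + 0^2*(c2*0 + c2*0 + 5*c2*c4 + 5*c2^2*c3)
        + 0^3*(3*c2*c3^2 + c2^2*0 + 2*c2^2*0 + 6*c2^2*c4)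
        + 0^4*(c2*c3*0 + 3*c2*c3*0 + 7*c2*c3*c4)
        + 0^5*(c2*0*0 + c2*c4*0 + 4*c2*c4*0 + 4*c2*c4^2))) := by
      refine ((((tendsto_const_nhds.add (he0.mul ?_)).add ((he0.pow 2).mul ?_)).add
        ((he0.pow 3).mul ?_)).add ((he0.pow 4).mul ?_)).add ((he0.pow 5).mul ?_)
      · exact (((hr1tend.sub hr2tend).sub tendsto_const_nhds).add tendsto_const_nhds).add
          tendsto_const_nhds
      · exact (((hr2tend.const_mul c2).add (hr1tend.const_mul c2)).add
          tendsto_const_nhds).add tendsto_const_nhds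
      · exact ((tendsto_const_nhds.add (hr2tend.const_mul (c2^2))).add
          (hr1tend.const_mul (2*c2^2))).add tendsto_const_nhds
      · exact ((hr2tend.const_mul (c2*c3)).add (hr1tend.const_mul (3*c2*c3))).add
          tendsto_const_nhds
      · exact ((((hr1tend.const_mul c2).mul hr2tend).add (hr2tend.const_mul (c2*c4))).add
          (hr1tend.const_mul (4*c2*c4))).add tendsto_const_nhds
    norm_num at h
    convert h using 2 <;> ring
  -- V limit
  have hVtend : Tendsto VF l (𝓝 (c2*(3*c3)/1 + 2*c2*(3*c2^2-2*c3)/(1*1^2) - c2^3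
      - 4*0*c2^3*c2/(1*1) - 2*0^3*(c2^3)^2/1 - (g2*c2^2 + 0)*c2)) := by
    rw [hVF]
    exact ((((((hMtend.mul hBtend).div hD2tend one_ne_zero).add
      (((hMtend.const_mul 2).mul hLtend).div (hD1tend.mul (hD2tend.pow 2)) (by norm_num))).sub
      hKtend).sub
      ((((he0.const_mul 4).mul hKtend).mul hMtend).div (hD1tend.mul hD2tend) (by norm_num))).sub
      ((((he0.pow 3).const_mul 2).mul (hKtend.pow 2)).div hD1tend one_ne_zero)).sub
      ((((hUtend.pow 2).const_mul g2).add hqtend).mul hFtend)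
  have hfinal : Tendsto (fun x => VF x / D2F x) l
      (𝓝 (-(c2) * c3 + c2^3 * (5 - g2))) := by
    have h := hVtend.div hD2tend one_ne_zero
    convert h using 2
    norm_num
    field_simp
    ring
  -- the main eventual identity
  have hmain : ∀ᶠ x in l, (Phi f G x - xs) / (x - xs)^4 = VF x / D2F x := by
    filter_upwards [heene, hfne, hD1ne, hD2ne, hfxeq, hfdeq, hfyeq, hyeq, hueq]
      with x hx hfx h1n h2n hfx2 hfd2 hfy hy hu
    have hGu : G (f (yF x) / f x)
        = 1 + 2*((x-xs)*UF x) + g2*((x-xs)*UF x)^2 + (x-xs)^2*qF x := by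
      have hq : G (f (yF x) / f x)
          = 1 + 2*(f (yF x) / f x) + g2*(f (yF x) / f x)^2 + (x-xs)^2*qF x := by
        simp only [hqF]
        field_simp
        ring
      rw [hq, hu]
    have hkey := key_alg (x - xs) c2 (qF x) g2 (MF x) (KF x) (LF x) (BF x) (D1F x) (D2F x)
      hx h1n h2n (hBrel x) (hLrel x)
    have hkey2 : MF x - (1 + 2*((x-xs)*UF x) + g2*((x-xs)*UF x)^2 + (x-xs)^2*qF x)*FF x
        = (x-xs)^2 * VF x := by
      simp only [hVF, hUF, hFF]
      linear_combination hkey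
    have hP : Phi f G x = yF x - G (f (yF x)/f x) * (f (yF x) / deriv f x) := by
      simp only [Phi, hyF]
    have hPhi2 : Phi f G x - xs
        = (x-xs)^2 * (MF x - (1 + 2*((x-xs)*UF x) + g2*((x-xs)*UF x)^2 + (x-xs)^2*qF x)*FF x)
          / D2F x := by
      have hyx : yF x = xs + (x-xs)^2 * (MF x / D2F x) := by linarith [hy]
      rw [hP, hGu, hfy, hfd2, hyx]
      field_simp
      ring
    rw [hPhi2, hkey2]
    field_simp
  exact (hfinal.congr' (by filter_upwards [hmain] with x hx; rw [hx])).mono_left le_rfl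
end

section
/- Let f : ℝ → ℝ be three times continuously differentiable on an open set D, with a simple zero x* ∈ D. Define the Newton map N(x) = x − f(x)/f'(x) for x near x*. Then (N(x) − x*)/(x − x*)² tends to c₂ as x → x*. -/
open Filter Topology

/-- For the Newton map `N(x) = x - f x / f' x`,
`(N(x) - xs)/(x - xs)² → c₂` as `x → xs`, `x ≠ xs`. -/
theorem newton_quadratic_error_constant
    (D : Set ℝ) (hD : IsOpen D) (f : ℝ → ℝ) (xs : ℝ) (hxs : xs ∈ D)
    (hf : ContDiffOn ℝ 3 f D) (hf0 : f xs = 0) (hf1 : deriv f xs ≠ 0) :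
    Tendsto (fun x : ℝ => ((x - f x / deriv f x) - xs) / (x - xs) ^ 2) (𝓝[≠] xs)
      (𝓝 (c f xs 2)) := by
  set d := deriv f with hd
  set f2 := deriv (deriv f) with hf2def
  have hDn : D ∈ 𝓝 xs := hD.mem_nhds hxs
  have hf' : ContDiffOn ℝ 2 d D := hf.deriv_of_isOpen hD (by norm_num)
  have hf'' : ContDiffOn ℝ 1 f2 D := hf'.deriv_of_isOpen hD (by norm_num)
  -- continuity facts
  have hcf : ContinuousAt f xs :=
    (hf.continuousOn.continuousAt hDn)
  have hcd : ContinuousAt d xs :=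
    (hf'.continuousOn.continuousAt hDn)
  have hcf2 : ContinuousAt f2 xs :=
    (hf''.continuousOn.continuousAt hDn)
  have hdne : ∀ᶠ x in 𝓝 xs, d x ≠ 0 := hcd.eventually_ne hf1
  -- eventual differentiability
  have hdf : ∀ᶠ x in 𝓝 xs, HasDerivAt f (d x) x := by
    filter_upwards [hD.eventually_mem hxs] with x hx
    exact ((hf.differentiableOn (by norm_num)).differentiableAt
      (hD.mem_nhds hx)).hasDerivAt
  have hdd : ∀ᶠ x in 𝓝 xs, HasDerivAt d (f2 x) x := by
    filter_upwards [hD.eventually_mem hxs] with x hx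
    exact ((hf'.differentiableOn (by norm_num)).differentiableAt
      (hD.mem_nhds hx)).hasDerivAt
  -- the derivative of the Newton error
  have hG : ∀ᶠ x in 𝓝 xs, HasDerivAt (fun y => (y - f y / d y) - xs)
      (f x * f2 x / (d x) ^ 2) x := by
    filter_upwards [hdf, hdd, hdne] with x h1 h2 h3
    have hq : HasDerivAt (fun y => f y / d y)
        ((d x * d x - f x * f2 x) / (d x) ^ 2) x := h1.div h2 h3
    have : HasDerivAt (fun y => (y - f y / d y) - xs)
        (1 - (d x * d x - f x * f2 x) / (d x) ^ 2) x := ((hasDerivAt_id x).sub hq).sub_const xs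
    convert this using 1
    field_simp
    ring
  have hH : ∀ᶠ x in 𝓝 xs, HasDerivAt (fun y : ℝ => (y - xs) ^ 2) (2 * (x - xs)) x := by
    filter_upwards with x
    have : HasDerivAt (fun y : ℝ => (y - xs) ^ 2) (↑2 * (id x - xs) ^ (2 - 1) * 1) x :=
      ((hasDerivAt_id x).sub_const xs).pow 2
    simpa using this
  -- slope limit
  have hslope : Tendsto (fun x => f x / (x - xs)) (𝓝[≠] xs) (𝓝 (d xs)) := by
    have := hasDerivAt_iff_tendsto_slope.1 (hdf.self_of_nhds)
    refine this.congr (fun x => ?_)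
    simp [slope, hf0, div_eq_inv_mul]
  -- the limit of g'/h'
  have hdiv : Tendsto (fun x => (f x * f2 x / (d x) ^ 2) / (2 * (x - xs)))
      (𝓝[≠] xs) (𝓝 (c f xs 2)) := by
    have h2 : Tendsto (fun x => f2 x / (2 * (d x) ^ 2)) (𝓝[≠] xs)
        (𝓝 (f2 xs / (2 * (d xs) ^ 2))) := by
      refine Tendsto.div (hcf2.continuousWithinAt.tendsto) ?_ (by positivity)
      exact (tendsto_const_nhds.mul ((hcd.continuousWithinAt.tendsto).pow 2))
    have hmul := hslope.mul h2
    have hval : d xs * (f2 xs / (2 * (d xs) ^ 2)) = c f xs 2 := by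
      have : iteratedDeriv 2 f xs = f2 xs := by
        simp [hf2def, iteratedDeriv_succ, iteratedDeriv_zero]
      rw [c, this, Nat.factorial, ← hd]
      field_simp
      ring
    rw [hval] at hmul
    refine hmul.congr' ?_
    filter_upwards [eventually_nhdsWithin_of_eventually_nhds hdne,
      self_mem_nhdsWithin] with x h3 (hx : x ≠ xs)
    have hxx : x - xs ≠ 0 := sub_ne_zero.2 hx
    field_simp
  -- L'Hôpital
  refine HasDerivAt.lhopital_zero_nhdsNE
    (eventually_nhdsWithin_of_eventually_nhds hG)
    (eventually_nhdsWithin_of_eventually_nhds hH) ?_ ?_ ?_ hdiv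
  · filter_upwards [self_mem_nhdsWithin] with x (hx : x ≠ xs)
    have : x - xs ≠ 0 := sub_ne_zero.2 hx
    positivity
  · have : Tendsto (fun x => (x - f x / d x) - xs) (𝓝 xs) (𝓝 ((xs - f xs / d xs) - xs)) := by
      exact ((tendsto_id.sub (hcf.tendsto.div hcd.tendsto hf1)).sub tendsto_const_nhds)
    rw [hf0] at this
    simpa using this.mono_left nhdsWithin_le_nhds
  · have : Tendsto (fun x : ℝ => (x - xs) ^ 2) (𝓝 xs) (𝓝 ((xs - xs) ^ 2)) := by
      exact (tendsto_id.sub tendsto_const_nhds).pow 2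
    simpa using this.mono_left nhdsWithin_le_nhds
end

section
/- Let f : ℝ → ℝ be four times continuously differentiable on an open set D, with a simple zero x* ∈ D. Define the Newton map N(x) = x − f(x)/f'(x) for x near x*. Then (N(x) − x* − c₂·(x − x*)²)/(x − x*)³ tends to −2(c₂² − c₃) as x → x*. -/
open Filter Topology

lemma peano_taylor (n : ℕ) (g : ℝ → ℝ) (D : Set ℝ) (hD : IsOpen D) (xs : ℝ) (hxs : xs ∈ D)
    (hg : ContDiffOn ℝ n g D) :
    Tendsto (fun x : ℝ =>
      (g x - ∑ k ∈ Finset.range (n + 1),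
        iteratedDeriv k g xs / (Nat.factorial k : ℝ) * (x - xs) ^ k) / (x - xs) ^ n)
      (𝓝[≠] xs) (𝓝 0) := by
  induction n generalizing g with
  | zero =>
      have hc : ContinuousAt g xs := hg.continuousOn.continuousAt (hD.mem_nhds hxs)
      have h : Tendsto (fun x => g x - g xs) (𝓝 xs) (𝓝 (g xs - g xs)) :=
        hc.sub continuousAt_const |>.tendsto
      simp only [sub_self] at h
      simpa using h.mono_left nhdsWithin_le_nhds
  | succ n ih =>
      have hgd : ContDiffOn ℝ n (deriv g) D :=
        hg.deriv_of_isOpen hD (by exact_mod_cast le_refl (n+1 : ℕ∞))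
      set a : ℕ → ℝ := fun k => iteratedDeriv k g xs / (Nat.factorial k : ℝ) with ha
      set b : ℕ → ℝ := fun k => iteratedDeriv k (deriv g) xs / (Nat.factorial k : ℝ) with hb
      have hmemD : ∀ᶠ x in 𝓝[≠] xs, x ∈ D :=
        (hD.eventually_mem hxs).filter_mono nhdsWithin_le_nhds
      have hu : ∀ x ∈ D, HasDerivAt (fun y => g y - ∑ k ∈ Finset.range (n+2), a k * (y - xs)^k)
          (deriv g x - ∑ k ∈ Finset.range (n+1), b k * (x - xs)^k) x := by
        intro x hx
        have hgdiff : HasDerivAt g (deriv g x) x := by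
          have : DifferentiableWithinAt ℝ g D x :=
            (hg.differentiableOn (by simp)) x hx
          exact (this.differentiableAt (hD.mem_nhds hx)).hasDerivAt
        have hsum : HasDerivAt (fun y => ∑ k ∈ Finset.range (n+2), a k * (y - xs)^k)
            (∑ k ∈ Finset.range (n+2), a k * (↑k * (x - xs)^(k-1) * 1)) x := by
          apply HasDerivAt.fun_sum
          intro k _
          exact (((hasDerivAt_id x).sub_const xs).pow k).const_mul (a k)
        have hkey : ∑ k ∈ Finset.range (n+2), a k * (↑k * (x - xs)^(k-1) * 1)
            = ∑ k ∈ Finset.range (n+1), b k * (x - xs)^k := by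
          rw [Finset.sum_range_succ']
          simp only [ha, hb, Nat.cast_zero, zero_mul, mul_zero, mul_one, add_zero,
            Nat.add_sub_cancel]
          apply Finset.sum_congr rfl
          intro k _
          rw [iteratedDeriv_succ']
          have hfac : ((Nat.factorial (k+1) : ℝ)) = (k+1) * Nat.factorial k := by
            push_cast [Nat.factorial_succ]; ring
          rw [hfac]
          have h1 : ((k:ℝ)+1) ≠ 0 := by positivity
          have h2 : ((Nat.factorial k : ℝ)) ≠ 0 := by positivity
          field_simp
          push_cast
          ring
        rw [← hkey]
        exact hgdiff.sub hsum
      refine HasDerivAt.lhopital_zero_nhdsNE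
        (f := fun y => g y - ∑ k ∈ Finset.range (n+2), a k * (y - xs)^k)
        (f' := fun x => deriv g x - ∑ k ∈ Finset.range (n+1), b k * (x - xs)^k)
        (g := fun y => (y - xs)^(n+1))
        (g' := fun x => ((n:ℝ)+1) * (x - xs)^n)
        ?_ ?_ ?_ ?_ ?_ ?_
      · exact hmemD.mono fun x hx => hu x hx
      · refine Eventually.of_forall fun x => ?_
        have := ((hasDerivAt_id x).sub_const xs).fun_pow (n+1)
        simpa using this
      · refine eventually_mem_nhdsWithin.mono fun x hx => ?_
        have hx' : x ≠ xs := hx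
        exact mul_ne_zero (by positivity) (pow_ne_zero _ (sub_ne_zero.mpr hx'))
      · have hc : ContinuousAt (fun y => g y - ∑ k ∈ Finset.range (n+2), a k * (y - xs)^k) xs := by
          refine (hg.continuousOn.continuousAt (hD.mem_nhds hxs)).sub ?_
          exact (continuous_finset_sum _ fun k _ =>
            (continuous_const.mul ((continuous_id.sub continuous_const).pow k))).continuousAt
        have h0 : g xs - ∑ k ∈ Finset.range (n+2), a k * (xs - xs)^k = 0 := by
          simp [ha, Finset.sum_range_succ']
        have h1 := hc.tendsto
        rw [h0] at h1
        exact h1.mono_left nhdsWithin_le_nhds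
      · have : ContinuousAt (fun y : ℝ => (y - xs)^(n+1)) xs :=
          ((continuousAt_id).sub continuousAt_const).pow (n+1)
        have h := this.tendsto
        simp only [sub_self, zero_pow (Nat.succ_ne_zero n)] at h
        exact h.mono_left nhdsWithin_le_nhds
      · have hIH := ih (deriv g) hgd
        have h2 := hIH.div_const ((n:ℝ)+1)
        rw [zero_div] at h2
        refine h2.congr fun x => ?_
        rw [div_div, mul_comm]

/-- Second term in the error expansion of the Newton map:
`(N(x) - xs - c₂ (x - xs)²)/(x - xs)³ → -2(c₂² - c₃)` as `x → xs`, `x ≠ xs`. -/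
theorem newton_cubic_error_term
    (D : Set ℝ) (hD : IsOpen D) (f : ℝ → ℝ) (xs : ℝ) (hxs : xs ∈ D)
    (hf : ContDiffOn ℝ 4 f D) (hf0 : f xs = 0) (hf1 : deriv f xs ≠ 0) :
    Tendsto
      (fun x : ℝ => ((x - f x / deriv f x) - xs - c f xs 2 * (x - xs) ^ 2) / (x - xs) ^ 3)
      (𝓝[≠] xs) (𝓝 (-2 * ((c f xs 2) ^ 2 - c f xs 3))) := by
  have hfd : ContDiffOn ℝ 3 (deriv f) D :=
    hf.deriv_of_isOpen hD (by norm_num)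
  set a1 := deriv f xs with ha1
  set a2 := iteratedDeriv 2 f xs with ha2
  set a3 := iteratedDeriv 3 f xs with ha3
  have hc2 : c f xs 2 = a2 / (2 * a1) := by
    simp [c, Nat.factorial, ← ha1, ← ha2]
  have hc3 : c f xs 3 = a3 / (6 * a1) := by
    simp [c, Nat.factorial, ← ha1, ← ha3]
  set c2 := c f xs 2 with hc2d
  set c3 := c f xs 3 with hc3d
  -- Peano remainders
  have hE1 : Tendsto (fun x : ℝ =>
      (f x - (a1*(x-xs) + a2/2*(x-xs)^2 + a3/6*(x-xs)^3)) / (x-xs)^3) (𝓝[≠] xs) (𝓝 0) := by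
    have h := peano_taylor 3 f D hD xs hxs (hf.of_le (by norm_num))
    have hsum : ∀ x : ℝ, ∑ k ∈ Finset.range 4,
        iteratedDeriv k f xs / (Nat.factorial k : ℝ) * (x - xs) ^ k
        = a1*(x-xs) + a2/2*(x-xs)^2 + a3/6*(x-xs)^3 := by
      intro x
      simp [Finset.sum_range_succ, Nat.factorial, hf0, iteratedDeriv_one, ← ha1, ← ha2, ← ha3]
    simpa only [hsum] using h
  have hE2 : Tendsto (fun x : ℝ =>
      (deriv f x - (a1 + a2*(x-xs) + a3/2*(x-xs)^2)) / (x-xs)^2) (𝓝[≠] xs) (𝓝 0) := by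
    have h := peano_taylor 2 (deriv f) D hD xs hxs (hfd.of_le (by norm_num))
    have hsum : ∀ x : ℝ, ∑ k ∈ Finset.range 3,
        iteratedDeriv k (deriv f) xs / (Nat.factorial k : ℝ) * (x - xs) ^ k
        = a1 + a2*(x-xs) + a3/2*(x-xs)^2 := by
      intro x
      have e1 : iteratedDeriv 1 (deriv f) xs = a2 := by
        rw [← iteratedDeriv_succ', ha2]
      have e2 : iteratedDeriv 2 (deriv f) xs = a3 := by
        rw [← iteratedDeriv_succ', ha3]
      simp [Finset.sum_range_succ, Nat.factorial, iteratedDeriv_zero, e1, e2, ← ha1]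
    simpa only [hsum] using h
  -- continuity of deriv f at xs
  have hcont : ContinuousAt (deriv f) xs :=
    (hfd.continuousOn.continuousAt (hD.mem_nhds hxs))
  have hne : ∀ᶠ x in 𝓝[≠] xs, deriv f x ≠ 0 :=
    (hcont.eventually_ne hf1).filter_mono nhdsWithin_le_nhds
  set E1 : ℝ → ℝ := fun x =>
    (f x - (a1*(x-xs) + a2/2*(x-xs)^2 + a3/6*(x-xs)^3)) / (x-xs)^3 with hE1d
  set E2 : ℝ → ℝ := fun x =>
    (deriv f x - (a1 + a2*(x-xs) + a3/2*(x-xs)^2)) / (x-xs)^2 with hE2d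
  have hsub : Tendsto (fun x : ℝ => x - xs) (𝓝[≠] xs) (𝓝 0) := by
    have : Tendsto (fun x : ℝ => x - xs) (𝓝 xs) (𝓝 (xs - xs)) :=
      (continuous_id.sub continuous_const).continuousAt
    simpa using this.mono_left nhdsWithin_le_nhds
  have hden : Tendsto (deriv f) (𝓝[≠] xs) (𝓝 a1) := hcont.tendsto.mono_left nhdsWithin_le_nhds
  have hnum : Tendsto (fun x : ℝ =>
      a1*(2*c3 - 2*c2^2) - 3*a1*c2*c3*(x-xs) + E2 x - E1 x - c2*(x-xs)*E2 x)
      (𝓝[≠] xs) (𝓝 (a1*(2*c3 - 2*c2^2))) := by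
    have h := (((((tendsto_const_nhds (x := a1*(2*c3 - 2*c2^2))).sub ((tendsto_const_nhds (x := 3*a1*c2*c3)).mul hsub)).add
      hE2).sub hE1).sub (((tendsto_const_nhds (x := c2)).mul hsub).mul hE2))
    simpa using h
  have hG : Tendsto (fun x : ℝ =>
      (a1*(2*c3 - 2*c2^2) - 3*a1*c2*c3*(x-xs) + E2 x - E1 x - c2*(x-xs)*E2 x) / deriv f x)
      (𝓝[≠] xs) (𝓝 (-2 * (c2^2 - c3))) := by
    have h := hnum.div hden hf1
    have : a1*(2*c3 - 2*c2^2) / a1 = -2 * (c2^2 - c3) := by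
      field_simp
      ring
    rwa [this] at h
  refine hG.congr' ?_
  filter_upwards [hne, eventually_mem_nhdsWithin] with x hfx hx
  have hxne : x - xs ≠ 0 := sub_ne_zero.mpr hx
  rw [hE1d, hE2d, hc2, hc3]
  field_simp
  ring
end

section
/- Let f : ℝ → ℝ be five times continuously differentiable on an open set D, with a simple zero x* ∈ D. Then the two-step Newton method yₙ = xₙ − f(xₙ)/f'(xₙ), xₙ₊₁ = yₙ − f(yₙ)/f'(yₙ) has convergence order four: there exist δ > 0 and C > 0 such that for every x₀ with |x₀ − x*| < δ, the sequence (xₙ) is well defined (with the convention that it stops at x* when an iterate equals x*), converges to x*, and satisfies |xₙ₊₁ − x*| ≤ C·|xₙ − x*|⁴ for all n. -/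
open Filter Topology

/-- One step of the two-step Newton method. -/
noncomputable def newton2Step (f : ℝ → ℝ) (x : ℝ) : ℝ :=
  let y := x - f x / deriv f x
  y - f y / deriv f y

/-- The two-step Newton method has convergence order four. -/
theorem two_step_newton_order_four
    (D : Set ℝ) (hD : IsOpen D) (f : ℝ → ℝ) (xs : ℝ) (hxs : xs ∈ D)
    (hf : ContDiffOn ℝ 5 f D) (hf0 : f xs = 0) (hf1 : deriv f xs ≠ 0) :
    ∃ δ > (0 : ℝ), ∃ C > (0 : ℝ), ∀ x₀ : ℝ, |x₀ - xs| < δ →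
      (∀ n : ℕ, deriv f ((newton2Step f)^[n] x₀) ≠ 0) ∧
      (∀ n : ℕ, (newton2Step f)^[n] x₀ ≠ xs → f ((newton2Step f)^[n] x₀) ≠ 0) ∧
      (∀ n : ℕ, (newton2Step f)^[n] x₀ = xs → (newton2Step f)^[n + 1] x₀ = xs) ∧
      Tendsto (fun n : ℕ => (newton2Step f)^[n] x₀) atTop (𝓝 xs) ∧
      (∀ n : ℕ, |(newton2Step f)^[n + 1] x₀ - xs| ≤ C * |(newton2Step f)^[n] x₀ - xs| ^ 4) := by
  classical
  -- Shrink to an open ball inside D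
  obtain ⟨r₀, hr₀, hballD⟩ := Metric.isOpen_iff.mp hD xs hxs
  set V : Set ℝ := Metric.ball xs r₀ with hV
  have hVo : IsOpen V := Metric.isOpen_ball
  have hxsV : xs ∈ V := Metric.mem_ball_self hr₀
  have hfV : ContDiffOn ℝ 5 f V := hf.mono hballD
  have hf'V : ContDiffOn ℝ 4 (deriv f) V := by
    exact hfV.deriv_of_isOpen hVo (m := 4) (by norm_num)
  have hdf : ∀ x ∈ V, HasDerivAt f (deriv f x) x := fun x hx =>
    ((hfV.differentiableOn (by norm_num)).differentiableAt (hVo.mem_nhds hx)).hasDerivAt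
  have hdf' : ∀ x ∈ V, HasDerivAt (deriv f) (deriv (deriv f) x) x := fun x hx =>
    ((hf'V.differentiableOn (by norm_num)).differentiableAt (hVo.mem_nhds hx)).hasDerivAt
  have hf''cont : ContinuousOn (deriv (deriv f)) V := by
    exact (hf'V.deriv_of_isOpen hVo (m := 3) (by norm_num)).continuousOn
  -- continuity of deriv f at xs: get lower bound neighborhood
  set m : ℝ := |deriv f xs| / 2 with hm_def
  have hm : 0 < m := by positivity
  have hcont' : ContinuousAt (deriv f) xs :=
    (hf'V.continuousOn.continuousAt (hVo.mem_nhds hxsV))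
  obtain ⟨ε, hε, hεlt⟩ := Metric.continuousAt_iff.mp hcont' m hm
  -- choose the radius
  set r : ℝ := min (r₀ / 2) (ε / 2) with hr_def
  have hr : 0 < r := lt_min (by linarith) (by linarith)
  set B : Set ℝ := Metric.closedBall xs r with hB
  have hBV : B ⊆ V := fun x hx => by
    have : dist x xs ≤ r := Metric.mem_closedBall.mp hx
    have : dist x xs < r₀ := lt_of_le_of_lt this (lt_of_le_of_lt (min_le_left _ _) (by linarith))
    exact Metric.mem_ball.mpr this
  have hxsB : xs ∈ B := Metric.mem_closedBall_self hr.le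
  have hBconv : Convex ℝ B := convex_closedBall _ _
  -- lower bound for |deriv f| on B
  have hlow : ∀ x ∈ B, m ≤ |deriv f x| := by
    intro x hx
    have hd : dist x xs < ε := by
      have : dist x xs ≤ r := Metric.mem_closedBall.mp hx
      exact lt_of_le_of_lt this (lt_of_le_of_lt (min_le_right _ _) (by linarith))
    have := hεlt hd
    have h1 : |deriv f x - deriv f xs| < m := by
      rwa [Real.dist_eq] at this
    have h2 : |deriv f xs| - |deriv f x| ≤ |deriv f x - deriv f xs| := by
      have := abs_sub_abs_le_abs_sub (deriv f xs) (deriv f x)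
      rwa [abs_sub_comm] at this
    have : |deriv f xs| = 2 * m := by rw [hm_def]; ring
    linarith
  have hne : ∀ x ∈ B, deriv f x ≠ 0 := by
    intro x hx h
    have := hlow x hx
    rw [h, abs_zero] at this
    linarith
  -- upper bound for |deriv (deriv f)| on B
  obtain ⟨M, hM⟩ : ∃ M, ∀ x ∈ B, |deriv (deriv f) x| ≤ M := by
    obtain ⟨M, hM⟩ := (isCompact_closedBall xs r).exists_bound_of_continuousOn
      (hf''cont.mono hBV)
    exact ⟨M, fun x hx => by simpa [Real.norm_eq_abs] using hM x hx⟩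
  have hM0 : 0 ≤ M := le_trans (abs_nonneg _) (hM xs hxsB)
  -- Lipschitz bound for deriv f on B
  have hlip : ∀ x ∈ B, ∀ t ∈ B, |deriv f t - deriv f x| ≤ M * |t - x| := by
    intro x hx t ht
    have := hBconv.norm_image_sub_le_of_norm_deriv_le
      (f := deriv f) (fun z hz => ((hdf' z (hBV hz)).differentiableAt))
      (fun z hz => by simpa [Real.norm_eq_abs] using hM z hz) hx ht
    simpa [Real.norm_eq_abs] using this
  -- the key quadratic estimate for one Newton step
  set K : ℝ := M / m + 1 with hK_def
  have hK1 : 1 ≤ K := by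
    have h0 : 0 ≤ M / m := div_nonneg hM0 hm.le
    rw [hK_def]
    linarith
  have hK0 : 0 < K := lt_of_lt_of_le one_pos hK1
  have key : ∀ x ∈ B, |x - f x / deriv f x - xs| ≤ K * |x - xs| ^ 2 := by
    intro x hx
    set c : ℝ := deriv f x with hc
    have hc0 : c ≠ 0 := hne x hx
    -- the auxiliary function h
    set h : ℝ → ℝ := fun t => f t - (f x + c * (t - x)) with hh
    have hseg : segment ℝ x xs ⊆ B := hBconv.segment_subset hx hxsB
    have hder : ∀ t ∈ segment ℝ x xs,
        HasDerivWithinAt h (deriv f t - c) (segment ℝ x xs) t := by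
      intro t ht
      have h1 : HasDerivAt (fun t => f x + c * (t - x)) c t := by
        have := (((hasDerivAt_id t).sub_const x).const_mul c).const_add (f x)
        simpa using this
      exact ((hdf t (hBV (hseg ht))).sub h1).hasDerivWithinAt
    have hbound : ∀ t ∈ segment ℝ x xs, ‖deriv f t - c‖ ≤ M * |xs - x| := by
      intro t ht
      have h1 : |deriv f t - c| ≤ M * |t - x| := hlip x hx t (hseg ht)
      have h2 : |t - x| ≤ |xs - x| := by
        have := dist_add_dist_of_mem_segment ht
        have h3 : dist x t ≤ dist x xs := by
          have : 0 ≤ dist t xs := dist_nonneg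
          linarith
        rw [Real.dist_eq, Real.dist_eq] at h3
        rw [abs_sub_comm t x, abs_sub_comm xs x]
        exact h3
      calc ‖deriv f t - c‖ = |deriv f t - c| := rfl
        _ ≤ M * |t - x| := h1
        _ ≤ M * |xs - x| := by nlinarith [abs_nonneg (t - x)]
    have hmv := (convex_segment x xs).norm_image_sub_le_of_norm_hasDerivWithin_le
      hder hbound (left_mem_segment ℝ x xs) (right_mem_segment ℝ x xs)
    have hhx : h x = 0 := by simp [hh]
    have hhxs : h xs = -(f x + c * (xs - x)) := by
      simp only [hh]; rw [hf0]; ring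
    have hest : |f x + c * (xs - x)| ≤ M * |xs - x| ^ 2 := by
      have h5 : ‖h xs - h x‖ ≤ M * |xs - x| * ‖xs - x‖ := hmv
      rw [hhx, sub_zero, hhxs, Real.norm_eq_abs, Real.norm_eq_abs, abs_neg] at h5
      calc |f x + c * (xs - x)| ≤ M * |xs - x| * |xs - x| := h5
        _ = M * |xs - x| ^ 2 := by ring
    -- rewrite the Newton step error
    have heq : x - f x / c - xs = -((f x + c * (xs - x)) / c) := by
      field_simp
      ring
    rw [heq, abs_neg, abs_div]
    have hcm : m ≤ |c| := hlow x hx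
    have hnum : |f x + c * (xs - x)| ≤ M * |x - xs| ^ 2 := by
      rwa [abs_sub_comm xs x] at hest
    calc |f x + c * (xs - x)| / |c| ≤ (M * |x - xs| ^ 2) / m := by
          apply div_le_div₀ (by positivity) hnum hm hcm
      _ = (M / m) * |x - xs| ^ 2 := by ring
      _ ≤ K * |x - xs| ^ 2 := by nlinarith [sq_nonneg (|x - xs|)]
  -- choice of δ
  set δ : ℝ := min r (1 / (2 * K)) with hδ_def
  have hδ : 0 < δ := lt_min hr (by positivity)
  have hδr : δ ≤ r := min_le_left _ _
  have hδK : δ ≤ 1 / (2 * K) := min_le_right _ _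
  -- single Newton step: quadratic estimate and contraction
  have hstep : ∀ x, |x - xs| < δ →
      |x - f x / deriv f x - xs| ≤ K * |x - xs| ^ 2 ∧
      |x - f x / deriv f x - xs| ≤ |x - xs| / 2 := by
    intro x hxδ
    have hxB : x ∈ B := Metric.mem_closedBall.mpr
      (by rw [Real.dist_eq]; exact le_trans hxδ.le hδr)
    have h1 := key x hxB
    refine ⟨h1, le_trans h1 ?_⟩
    have hKne : K ≠ 0 := ne_of_gt hK0
    have h2 : K * |x - xs| ≤ 1 / 2 := by
      have h6 : |x - xs| ≤ 1 / (2 * K) := le_trans hxδ.le hδK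
      calc K * |x - xs| ≤ K * (1 / (2 * K)) := mul_le_mul_of_nonneg_left h6 hK0.le
        _ = 1 / 2 := by field_simp
    have h3 := mul_le_mul_of_nonneg_right h2 (abs_nonneg (x - xs))
    calc K * |x - xs| ^ 2 = K * |x - xs| * |x - xs| := by ring
      _ ≤ 1 / 2 * |x - xs| := h3
      _ = |x - xs| / 2 := by ring
  -- two-step estimates
  have h2step : ∀ x, |x - xs| < δ →
      |newton2Step f x - xs| ≤ K ^ 3 * |x - xs| ^ 4 ∧
      |newton2Step f x - xs| ≤ |x - xs| / 2 ∧ |newton2Step f x - xs| < δ := by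
    intro x hxδ
    obtain ⟨h1, h2⟩ := hstep x hxδ
    set y := x - f x / deriv f x with hy
    have hyδ : |y - xs| < δ := lt_of_le_of_lt h2 (by linarith [abs_nonneg (x - xs)])
    obtain ⟨h3, h4⟩ := hstep y hyδ
    have hns : newton2Step f x = y - f y / deriv f y := rfl
    refine ⟨?_, ?_, ?_⟩
    · rw [hns]
      calc |y - f y / deriv f y - xs| ≤ K * |y - xs| ^ 2 := h3
        _ ≤ K * (K * |x - xs| ^ 2) ^ 2 :=
            mul_le_mul_of_nonneg_left (pow_le_pow_left₀ (abs_nonneg _) h1 2) hK0.le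
        _ = K ^ 3 * |x - xs| ^ 4 := by ring
    · rw [hns]
      calc |y - f y / deriv f y - xs| ≤ |y - xs| / 2 := h4
        _ ≤ |x - xs| / 2 := by linarith [abs_nonneg (x - xs)]
    · rw [hns]
      exact lt_of_le_of_lt h4 (by linarith [abs_nonneg (x - xs)])
  -- f x ≠ 0 for x ∈ B, x ≠ xs
  have hfne : ∀ x ∈ B, x ≠ xs → f x ≠ 0 := by
    intro x hxB hxne hfx
    have hIcc : ∀ a b : ℝ, a ∈ B → b ∈ B → Set.Icc a b ⊆ B :=
      fun a b ha hb => hBconv.ordConnected.out ha hb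
    rcases lt_or_gt_of_ne hxne with hlt | hgt
    · obtain ⟨c, hc, hc'⟩ := exists_hasDerivAt_eq_slope f (deriv f) hlt
        (fun t ht => (hdf t (hBV (hIcc x xs hxB hxsB ht))).continuousAt.continuousWithinAt)
        (fun t ht => hdf t (hBV (hIcc x xs hxB hxsB (Set.mem_Icc_of_Ioo ht))))
      have : deriv f c = 0 := by rw [hc', hf0, hfx]; ring
      exact hne c (hIcc x xs hxB hxsB (Set.mem_Icc_of_Ioo hc)) this
    · obtain ⟨c, hc, hc'⟩ := exists_hasDerivAt_eq_slope f (deriv f) hgt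
        (fun t ht => (hdf t (hBV (hIcc xs x hxsB hxB ht))).continuousAt.continuousWithinAt)
        (fun t ht => hdf t (hBV (hIcc xs x hxsB hxB (Set.mem_Icc_of_Ioo ht))))
      have : deriv f c = 0 := by rw [hc', hf0, hfx]; ring
      exact hne c (hIcc xs x hxsB hxB (Set.mem_Icc_of_Ioo hc)) this
  -- now the main statement
  refine ⟨δ, hδ, K ^ 3, by positivity, fun x₀ hx₀ => ?_⟩
  have hitsucc : ∀ n : ℕ, (newton2Step f)^[n + 1] x₀ = newton2Step f ((newton2Step f)^[n] x₀) :=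
    fun n => Function.iterate_succ_apply' _ _ _
  have hmem : ∀ n, |(newton2Step f)^[n] x₀ - xs| < δ := by
    intro n
    induction n with
    | zero => simpa using hx₀
    | succ n ih =>
      rw [hitsucc]
      exact (h2step _ ih).2.2
  have hmemB : ∀ n, (newton2Step f)^[n] x₀ ∈ B := fun n => Metric.mem_closedBall.mpr
    (by rw [Real.dist_eq]; exact le_trans (hmem n).le hδr)
  refine ⟨fun n => hne _ (hmemB n), fun n hn => hfne _ (hmemB n) hn, ?_, ?_, ?_⟩
  · intro n hn
    rw [hitsucc n, hn]
    simp [newton2Step, hf0]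
  · have hbound : ∀ n, |(newton2Step f)^[n] x₀ - xs| ≤ (1 / 2) ^ n * δ := by
      intro n
      induction n with
      | zero => simpa using (hmem 0).le
      | succ n ih =>
        rw [hitsucc]
        have := (h2step _ (hmem n)).2.1
        calc |newton2Step f ((newton2Step f)^[n] x₀) - xs| ≤ |(newton2Step f)^[n] x₀ - xs| / 2 := this
          _ ≤ ((1 / 2) ^ n * δ) / 2 := by linarith
          _ = (1 / 2) ^ (n + 1) * δ := by ring
    have h0 : Tendsto (fun n : ℕ => |(newton2Step f)^[n] x₀ - xs|) atTop (𝓝 0) := by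
      have hg : Tendsto (fun n : ℕ => (1 / 2 : ℝ) ^ n * δ) atTop (𝓝 0) := by
        have := tendsto_pow_atTop_nhds_zero_of_lt_one (by norm_num : (0:ℝ) ≤ 1/2)
          (by norm_num : (1/2 : ℝ) < 1)
        simpa using this.mul_const δ
      exact squeeze_zero (fun n => abs_nonneg _) (fun n => hbound n) hg
    refine tendsto_iff_dist_tendsto_zero.mpr ?_
    simpa [Real.dist_eq] using h0
  · intro n
    rw [hitsucc]
    exact (h2step _ (hmem n)).1
end

section
/- Let f : ℝ → ℝ be three times continuously differentiable on an open set D, with a simple zero x* ∈ D. Define y(x) = x − f(x)/f'(x) and t(x) = f(y(x))/f(x) for x near x*, x ≠ x*. Then t(x)/(x − x*) tends to c₂ as x → x*. -/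
open Filter Topology

/-- With `y(x) = x - f x / f' x` and `t(x) = f(y(x))/f(x)`,
`t(x)/(x - xs) → c₂` as `x → xs`, `x ≠ xs`. -/
theorem t_ratio_first_order
    (D : Set ℝ) (hD : IsOpen D) (f : ℝ → ℝ) (xs : ℝ) (hxs : xs ∈ D)
    (hf : ContDiffOn ℝ 3 f D) (hf0 : f xs = 0) (hf1 : deriv f xs ≠ 0) :
    Tendsto (fun x : ℝ => (f (x - f x / deriv f x) / f x) / (x - xs)) (𝓝[≠] xs)
      (𝓝 (c f xs 2)) := by
  set L := deriv f xs with hL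
  have hD_nhds : D ∈ 𝓝 xs := hD.mem_nhds hxs
  -- regularity of derivatives
  have hf1' : ContDiffOn ℝ 2 (deriv f) D := hf.deriv_of_isOpen hD (by norm_num)
  have hf2' : ContDiffOn ℝ 1 (deriv (deriv f)) D := hf1'.deriv_of_isOpen hD (by norm_num)
  have hdf : ∀ x ∈ D, HasDerivAt f (deriv f x) x := fun x hx =>
    ((hf.contDiffAt (hD.mem_nhds hx)).differentiableAt (by norm_num)).hasDerivAt
  have hdf1 : ∀ x ∈ D, HasDerivAt (deriv f) (deriv (deriv f) x) x := fun x hx =>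
    ((hf1'.contDiffAt (hD.mem_nhds hx)).differentiableAt (by norm_num)).hasDerivAt
  have hcf : ContinuousAt f xs :=
    (hf.contDiffAt hD_nhds).continuousAt
  have hcf1 : ContinuousAt (deriv f) xs :=
    (hf1'.contDiffAt hD_nhds).continuousAt
  have hcf2 : ContinuousAt (deriv (deriv f)) xs :=
    (hf2'.contDiffAt hD_nhds).continuousAt
  -- slope limit for f
  have sA : Tendsto (fun x => f x / (x - xs)) (𝓝[≠] xs) (𝓝 L) := by
    have := hasDerivAt_iff_tendsto_slope.1 (hdf xs hxs)
    refine this.congr (fun x => ?_)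
    rw [slope_def_field, hf0, sub_zero]
  -- continuity of deriv f
  have sB : Tendsto (deriv f) (𝓝[≠] xs) (𝓝 L) :=
    hcf1.continuousWithinAt.tendsto
  -- f → 0
  have sf0 : Tendsto f (𝓝[≠] xs) (𝓝 0) := by
    have := hcf.continuousWithinAt (s := {xs}ᶜ)
    rwa [ContinuousWithinAt, hf0] at this
  -- L'Hôpital : N x / (x - xs)^2 → f''(xs)/2
  have sC : Tendsto (fun x => ((x - xs) * deriv f x - f x) / (x - xs) ^ 2) (𝓝[≠] xs)
      (𝓝 (deriv (deriv f) xs / 2)) := by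
    apply HasDerivAt.lhopital_zero_nhdsNE
        (f' := fun x => (x - xs) * deriv (deriv f) x) (g' := fun x => 2 * (x - xs))
    · filter_upwards [eventually_nhdsWithin_of_eventually_nhds
        (eventually_mem_nhds_iff.mpr (hD.eventually_mem hxs))] with x hx
      have h1 : HasDerivAt (fun x => (x - xs) * deriv f x)
          (1 * deriv f x + (x - xs) * deriv (deriv f) x) x :=
        ((hasDerivAt_id x).sub_const xs).mul (hdf1 x (mem_of_mem_nhds hx))
      have := h1.sub (hdf x (mem_of_mem_nhds hx))
      convert this using 1
      · rfl
      · rfl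
      · rfl
      ring
    · filter_upwards with x
      have h1 : HasDerivAt (fun x : ℝ => (x - xs) ^ 2) (2 * (x - xs) ^ 1 * 1) x :=
        (((hasDerivAt_id x).sub_const xs)).pow 2
      convert h1 using 1
      ring
    · filter_upwards [self_mem_nhdsWithin] with x hx
      have : x - xs ≠ 0 := sub_ne_zero.mpr hx
      positivity
    · have : Tendsto (fun x => (x - xs) * deriv f x - f x) (𝓝[≠] xs)
          (𝓝 ((xs - xs) * L - 0)) :=
        ((tendsto_nhdsWithin_of_tendsto_nhds
          ((continuous_id.sub continuous_const).tendsto xs)).mul sB).sub sf0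
      simpa using this
    · have : Tendsto (fun x : ℝ => (x - xs) ^ 2) (𝓝[≠] xs) (𝓝 ((xs - xs) ^ 2)) :=
        tendsto_nhdsWithin_of_tendsto_nhds
          (((continuous_id.sub continuous_const).pow 2).tendsto xs)
      simpa using this
    · have h2 : Tendsto (fun x => deriv (deriv f) x / 2) (𝓝[≠] xs)
          (𝓝 (deriv (deriv f) xs / 2)) :=
        (hcf2.continuousWithinAt.tendsto).div_const 2
      refine h2.congr' ?_
      filter_upwards [self_mem_nhdsWithin] with x hx
      have hne : x - xs ≠ 0 := sub_ne_zero.mpr hx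
      field_simp
  -- y → xs
  have sy : Tendsto (fun x => x - f x / deriv f x) (𝓝[≠] xs) (𝓝 xs) := by
    have : Tendsto (fun x => x - f x / deriv f x) (𝓝[≠] xs) (𝓝 (xs - 0 / L)) :=
      (tendsto_nhdsWithin_of_tendsto_nhds tendsto_id).sub (sf0.div sB hf1)
    simpa using this
  -- the auxiliary function g
  set g : ℝ → ℝ := fun z => if z = xs then L else f z / (z - xs) with hg
  have hgy : ∀ z, f z = g z * (z - xs) := by
    intro z
    by_cases hz : z = xs
    · simp [hg, hz, hf0]
    · simp [hg, hz, div_mul_cancel₀ _ (sub_ne_zero.mpr hz)]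
  have sg : Tendsto g (𝓝 xs) (𝓝 L) := by
    rw [← nhdsNE_sup_pure xs, tendsto_sup]
    constructor
    · refine sA.congr' ?_
      filter_upwards [self_mem_nhdsWithin] with x hx
      simp only [Set.mem_compl_iff, Set.mem_singleton_iff] at hx
      simp [hg, hx]
    · simp [hg, tendsto_pure_left]
      intro s hs
      exact mem_of_mem_nhds hs
  have sgy : Tendsto (fun x => g (x - f x / deriv f x)) (𝓝[≠] xs) (𝓝 L) :=
    sg.comp sy
  -- (x - xs) / f x → 1/L
  have sAinv : Tendsto (fun x => (x - xs) / f x) (𝓝[≠] xs) (𝓝 L⁻¹) := by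
    have := sA.inv₀ hf1
    refine this.congr (fun x => ?_)
    rw [inv_div]
  -- eventual nonvanishing
  have hfne : ∀ᶠ x in 𝓝[≠] xs, f x ≠ 0 := by
    have h1 : ∀ᶠ x in 𝓝[≠] xs, f x / (x - xs) ≠ 0 :=
      sA.eventually_ne hf1
    filter_upwards [h1] with x hx
    intro h0
    exact hx (by simp [h0])
  have hf1ne : ∀ᶠ x in 𝓝[≠] xs, deriv f x ≠ 0 := sB.eventually_ne hf1
  -- final combination
  have key : Tendsto (fun x => g (x - f x / deriv f x) *
      (((x - xs) * deriv f x - f x) / (x - xs) ^ 2) *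
      ((x - xs) / f x / deriv f x)) (𝓝[≠] xs)
      (𝓝 (L * (deriv (deriv f) xs / 2) * (L⁻¹ / L))) :=
    (sgy.mul sC).mul ((sAinv.div sB hf1))
  have hval : L * (deriv (deriv f) xs / 2) * (L⁻¹ / L) = c f xs 2 := by
    rw [c]
    have h2 : iteratedDeriv 2 f xs = deriv (deriv f) xs := by
      rw [iteratedDeriv_succ, iteratedDeriv_one]
    rw [h2, ← hL]
    field_simp
    ring
  rw [← hval]
  refine key.congr' ?_
  filter_upwards [hfne, hf1ne, self_mem_nhdsWithin] with x hx0 hx1 hxne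
  have hxs' : x - xs ≠ 0 := sub_ne_zero.mpr hxne
  have hyx : (x - f x / deriv f x) - xs = ((x - xs) * deriv f x - f x) / deriv f x := by
    field_simp
    ring
  have hy : f (x - f x / deriv f x) =
      g (x - f x / deriv f x) * ((x - xs) * deriv f x - f x) / deriv f x := by
    rw [hgy (x - f x / deriv f x), hyx, mul_div_assoc]
  rw [hy]
  field_simp
end

section
/- Let f : ℝ → ℝ be four times continuously differentiable on an open set D, with a simple zero x* ∈ D. Define y(x) = x − f(x)/f'(x) and t(x) = f(y(x))/f(x) for x near x*, x ≠ x*. Then (t(x) − c₂·(x − x*))/(x − x*)² tends to −3c₂² + 2c₃ as x → x*. -/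
open Filter Topology


lemma peano1 {g : ℝ → ℝ} {a xs : ℝ} (hg : HasDerivAt g a xs) :
    Tendsto (fun x => (g x - g xs - a * (x - xs)) / (x - xs)) (𝓝[≠] xs) (𝓝 0) := by
  have h := hasDerivAt_iff_tendsto_slope.mp hg
  have h2 : Tendsto (fun x => slope g xs x - a) (𝓝[≠] xs) (𝓝 (a - a)) := h.sub_const a
  rw [sub_self] at h2
  refine h2.congr' ?_
  filter_upwards [self_mem_nhdsWithin] with x hx
  have hxne : x - xs ≠ 0 := sub_ne_zero.mpr hx
  rw [slope_def_field]
  field_simp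

lemma peano2 {g0 g1 : ℝ → ℝ} {a2 xs : ℝ}
    (hg01 : ∀ᶠ y in 𝓝 xs, HasDerivAt g0 (g1 y) y)
    (hg12 : HasDerivAt g1 a2 xs) :
    Tendsto (fun x => (g0 x - g0 xs - g1 xs * (x - xs) - a2 / 2 * (x - xs) ^ 2) / (x - xs) ^ 2)
      (𝓝[≠] xs) (𝓝 0) := by
  have hdiv : Tendsto (fun x => (g1 x - g1 xs - a2 * (x - xs)) / (2 * (x - xs)))
      (𝓝[≠] xs) (𝓝 0) := by
    have := (peano1 hg12).div_const 2
    rw [zero_div] at this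
    refine this.congr fun x => ?_
    rw [div_div]; ring_nf
  have := HasDerivAt.lhopital_zero_nhdsNE
    (f := fun x => g0 x - g0 xs - g1 xs * (x - xs) - a2 / 2 * (x - xs) ^ 2)
    (f' := fun x => g1 x - g1 xs - a2 * (x - xs))
    (g := fun x => (x - xs) ^ 2) (g' := fun x => 2 * (x - xs))
    ?_ ?_ ?_ ?_ ?_ hdiv
  · exact this
  · filter_upwards [hg01.filter_mono nhdsWithin_le_nhds] with y hy
    have h1 : HasDerivAt (fun x : ℝ => g1 xs * (x - xs)) (g1 xs) y := by
      simpa using (((hasDerivAt_id y).sub_const xs).const_mul (g1 xs))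
    have h2 : HasDerivAt (fun x : ℝ => a2 / 2 * (x - xs) ^ 2) (a2 * (y - xs)) y := by
      have := (((hasDerivAt_id y).sub_const xs).pow 2).const_mul (a2 / 2)
      refine this.congr_deriv ?_
      simp [id]
      ring
    simpa [Pi.sub_def] using ((hy.sub_const (g0 xs)).sub h1).sub h2
  · filter_upwards with y
    have := (((hasDerivAt_id y).sub_const xs).pow 2)
    simpa [Pi.pow_def] using this
  · filter_upwards [self_mem_nhdsWithin] with y hy
    have : y - xs ≠ 0 := sub_ne_zero.mpr hy
    positivity
  · have hc : ContinuousAt g0 xs := hg01.self_of_nhds.continuousAt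
    have : Tendsto (fun x => g0 x - g0 xs - g1 xs * (x - xs) - a2 / 2 * (x - xs) ^ 2)
        (𝓝 xs) (𝓝 (g0 xs - g0 xs - g1 xs * (xs - xs) - a2 / 2 * (xs - xs) ^ 2)) := by
      exact ((hc.tendsto.sub_const _).sub ((tendsto_id.sub_const xs).const_mul _)).sub
        (((tendsto_id.sub_const xs).pow 2).const_mul _)
    simp only [sub_self, mul_zero, ne_eq, OfNat.ofNat_ne_zero, not_false_eq_true, zero_pow,
      sub_zero, zero_mul] at this
    exact this.mono_left nhdsWithin_le_nhds
  · have : Tendsto (fun x : ℝ => (x - xs) ^ 2) (𝓝 xs) (𝓝 ((xs - xs) ^ 2)) :=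
      (tendsto_id.sub_const xs).pow 2
    simp only [sub_self] at this
    rw [show ((0:ℝ))^2 = 0 by norm_num] at this
    exact this.mono_left nhdsWithin_le_nhds

lemma peano3 {g0 g1 g2 : ℝ → ℝ} {a3 xs : ℝ}
    (hg01 : ∀ᶠ y in 𝓝 xs, HasDerivAt g0 (g1 y) y)
    (hg12 : ∀ᶠ y in 𝓝 xs, HasDerivAt g1 (g2 y) y)
    (hg23 : HasDerivAt g2 a3 xs) :
    Tendsto (fun x => (g0 x - g0 xs - g1 xs * (x - xs) - g2 xs / 2 * (x - xs) ^ 2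
        - a3 / 6 * (x - xs) ^ 3) / (x - xs) ^ 3)
      (𝓝[≠] xs) (𝓝 0) := by
  have hdiv : Tendsto (fun x => (g1 x - g1 xs - g2 xs * (x - xs) - a3 / 2 * (x - xs) ^ 2)
      / (3 * (x - xs) ^ 2)) (𝓝[≠] xs) (𝓝 0) := by
    have := (peano2 hg12 hg23).div_const 3
    rw [zero_div] at this
    refine this.congr fun x => ?_
    rw [div_div]; ring_nf
  have := HasDerivAt.lhopital_zero_nhdsNE
    (f := fun x => g0 x - g0 xs - g1 xs * (x - xs) - g2 xs / 2 * (x - xs) ^ 2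
        - a3 / 6 * (x - xs) ^ 3)
    (f' := fun x => g1 x - g1 xs - g2 xs * (x - xs) - a3 / 2 * (x - xs) ^ 2)
    (g := fun x => (x - xs) ^ 3) (g' := fun x => 3 * (x - xs) ^ 2)
    ?_ ?_ ?_ ?_ ?_ hdiv
  · exact this
  · filter_upwards [hg01.filter_mono nhdsWithin_le_nhds] with y hy
    have h1 : HasDerivAt (fun x : ℝ => g1 xs * (x - xs)) (g1 xs) y := by
      simpa using (((hasDerivAt_id y).sub_const xs).const_mul (g1 xs))
    have h2 : HasDerivAt (fun x : ℝ => g2 xs / 2 * (x - xs) ^ 2) (g2 xs * (y - xs)) y := by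
      have := (((hasDerivAt_id y).sub_const xs).pow 2).const_mul (g2 xs / 2)
      refine this.congr_deriv ?_
      simp [id]; ring
    have h3 : HasDerivAt (fun x : ℝ => a3 / 6 * (x - xs) ^ 3) (a3 / 2 * (y - xs) ^ 2) y := by
      have := (((hasDerivAt_id y).sub_const xs).pow 3).const_mul (a3 / 6)
      refine this.congr_deriv ?_
      simp [id]; ring
    simpa [Pi.sub_def] using (((hy.sub_const (g0 xs)).sub h1).sub h2).sub h3
  · filter_upwards with y
    have := ((hasDerivAt_id y).sub_const xs).pow 3
    simpa [Pi.pow_def] using this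
  · filter_upwards [self_mem_nhdsWithin] with y hy
    have : y - xs ≠ 0 := sub_ne_zero.mpr hy
    positivity
  · have hc : ContinuousAt g0 xs := hg01.self_of_nhds.continuousAt
    have : Tendsto (fun x => g0 x - g0 xs - g1 xs * (x - xs) - g2 xs / 2 * (x - xs) ^ 2
        - a3 / 6 * (x - xs) ^ 3) (𝓝 xs)
        (𝓝 (g0 xs - g0 xs - g1 xs * (xs - xs) - g2 xs / 2 * (xs - xs) ^ 2
          - a3 / 6 * (xs - xs) ^ 3)) :=
      (((hc.tendsto.sub_const _).sub ((tendsto_id.sub_const xs).const_mul _)).sub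
        (((tendsto_id.sub_const xs).pow 2).const_mul _)).sub
        (((tendsto_id.sub_const xs).pow 3).const_mul _)
    simp only [sub_self, mul_zero, ne_eq, OfNat.ofNat_ne_zero, not_false_eq_true, zero_pow,
      sub_zero, zero_mul] at this
    exact this.mono_left nhdsWithin_le_nhds
  · have : Tendsto (fun x : ℝ => (x - xs) ^ 3) (𝓝 xs) (𝓝 ((xs - xs) ^ 3)) :=
      (tendsto_id.sub_const xs).pow 3
    simp only [sub_self] at this
    rw [show ((0:ℝ))^3 = 0 by norm_num] at this
    exact this.mono_left nhdsWithin_le_nhds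

lemma derivs_nhds {f : ℝ → ℝ} {D : Set ℝ} (hD : IsOpen D) {xs : ℝ} (hxs : xs ∈ D)
    (hf : ContDiffOn ℝ 4 f D) {m : ℕ} (hm : m < 4) :
    ∀ᶠ y in 𝓝 xs, HasDerivAt (iteratedDeriv m f) (iteratedDeriv (m + 1) f y) y := by
  have heq : ∀ y ∈ D, iteratedDerivWithin m f D y = iteratedDeriv m f y := fun y hy => by
    rw [iteratedDerivWithin_eq_iteratedFDerivWithin, iteratedDeriv_eq_iteratedFDeriv,
      iteratedFDerivWithin_of_isOpen m hD hy]
  have hdiff : DifferentiableOn ℝ (iteratedDerivWithin m f D) D :=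
    hf.differentiableOn_iteratedDerivWithin (by exact_mod_cast hm) hD.uniqueDiffOn
  filter_upwards [hD.mem_nhds hxs] with y hy
  have h1 : DifferentiableAt ℝ (iteratedDerivWithin m f D) y :=
    (hdiff y hy).differentiableAt (hD.mem_nhds hy)
  have h2 : iteratedDerivWithin m f D =ᶠ[𝓝 y] iteratedDeriv m f := by
    filter_upwards [hD.mem_nhds hy] with z hz using heq z hz
  have h3 : DifferentiableAt ℝ (iteratedDeriv m f) y := h1.congr_of_eventuallyEq h2.symm
  rw [iteratedDeriv_succ]
  exact h3.hasDerivAt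

lemma phi_tendsto {c2 c3 d1 : ℝ} (hd1 : d1 ≠ 0) {l : Filter ℝ} {E A B C : ℝ → ℝ}
    (hE : Tendsto E l (𝓝 0)) (hA : Tendsto A l (𝓝 0)) (hB : Tendsto B l (𝓝 0))
    (hC : Tendsto C l (𝓝 0)) :
    Tendsto (fun x =>
      (d1 * ((2*c3 + B x - A x - 3*c2^2) -
         c2 * ((3*c3 + B x) + 2*c2^2 + (c3 + A x)
           + E x * (c2*(3*c3 + B x) + 2*c2*(c3 + A x))
           + E x^2 * ((c3 + A x)*(3*c3 + B x))) * E x)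
        / (1 + 2*c2*E x + (3*c3 + B x)*E x^2)
       + (c2*d1 + C x) * E x *
         ((c2 + (2*c3 + B x - A x)*E x) / (1 + 2*c2*E x + (3*c3 + B x)*E x^2))^2)
      / (d1 * (1 + c2*E x + (c3 + A x)*E x^2))) l (𝓝 (-3*c2^2 + 2*c3)) := by
  set Φ : ℝ × ℝ × ℝ × ℝ → ℝ := fun p =>
      (d1 * ((2*c3 + p.2.2.1 - p.2.1 - 3*c2^2) -
         c2 * ((3*c3 + p.2.2.1) + 2*c2^2 + (c3 + p.2.1)
           + p.1 * (c2*(3*c3 + p.2.2.1) + 2*c2*(c3 + p.2.1))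
           + p.1^2 * ((c3 + p.2.1)*(3*c3 + p.2.2.1))) * p.1)
        / (1 + 2*c2*p.1 + (3*c3 + p.2.2.1)*p.1^2)
       + (c2*d1 + p.2.2.2) * p.1 *
         ((c2 + (2*c3 + p.2.2.1 - p.2.1)*p.1) / (1 + 2*c2*p.1 + (3*c3 + p.2.2.1)*p.1^2))^2)
      / (d1 * (1 + c2*p.1 + (c3 + p.2.1)*p.1^2)) with hΦ
  have hcont : ContinuousAt Φ ((0:ℝ), (0:ℝ), (0:ℝ), (0:ℝ)) := by
    rw [hΦ]
    fun_prop (disch := simp [hd1])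
  have hval : Φ ((0:ℝ), (0:ℝ), (0:ℝ), (0:ℝ)) = -3*c2^2 + 2*c3 := by
    rw [hΦ]
    simp only
    field_simp
    ring
  have htup : Tendsto (fun x => (E x, A x, B x, C x)) l (𝓝 ((0:ℝ), (0:ℝ), (0:ℝ), (0:ℝ))) := by
    rw [nhds_prod_eq, nhds_prod_eq, nhds_prod_eq]
    exact hE.prodMk (hA.prodMk (hB.prodMk hC))
  have := hcont.tendsto.comp htup
  rw [hval] at this
  exact this

lemma key_algebra (c2 c3 d1 e a b g u fy : ℝ) (he : e ≠ 0) (hd1 : d1 ≠ 0)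
    (hPne : 1 + c2*e + (c3+a)*e^2 ≠ 0) (hQne : 1 + 2*c2*e + (3*c3+b)*e^2 ≠ 0)
    (hu : u = e * ((1+2*c2*e+(3*c3+b)*e^2) - (1+c2*e+(c3+a)*e^2)) / (1+2*c2*e+(3*c3+b)*e^2))
    (hfy : fy = d1*(u + c2*u^2) + g*u^2) :
    (fy / (d1*e*(1+c2*e+(c3+a)*e^2)) - c2*e)/e^2 =
      (d1 * ((2*c3 + b - a - 3*c2^2) -
         c2 * ((3*c3+b) + 2*c2^2 + (c3+a) + e*(c2*(3*c3+b)+2*c2*(c3+a))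
           + e^2*((c3+a)*(3*c3+b))) * e) / (1+2*c2*e+(3*c3+b)*e^2)
       + (c2*d1 + g) * e * ((c2 + (2*c3+b-a)*e)/(1+2*c2*e+(3*c3+b)*e^2))^2)
      / (d1*(1+c2*e+(c3+a)*e^2)) := by
  have hQP : (1+2*c2*e+(3*c3+b)*e^2) - (1+c2*e+(c3+a)*e^2) = e*(c2+(2*c3+b-a)*e) := by ring
  rw [hQP] at hu
  set Q := 1+2*c2*e+(3*c3+b)*e^2 with hQdef
  set P := 1+c2*e+(c3+a)*e^2 with hPdef
  set W := (c2+(2*c3+b-a)*e)/Q with hWdef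
  have hu2 : u = e^2*W := by rw [hu, hWdef]; field_simp
  have h1 : W - c2*P = e*((2*c3 + b - a - 3*c2^2) -
      c2 * ((3*c3+b) + 2*c2^2 + (c3+a) + e*(c2*(3*c3+b)+2*c2*(c3+a))
        + e^2*((c3+a)*(3*c3+b))) * e)/Q := by
    rw [hWdef, hPdef, hQdef]
    rw [div_sub' hQne, div_eq_div_iff hQne hQne]
    ring
  have h2 : d1 * ((2*c3 + b - a - 3*c2^2) -
      c2 * ((3*c3+b) + 2*c2^2 + (c3+a) + e*(c2*(3*c3+b)+2*c2*(c3+a))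
        + e^2*((c3+a)*(3*c3+b))) * e) / Q = d1 * (W - c2*P) / e := by
    rw [h1]; field_simp
  rw [h2, hfy, hu2]
  field_simp
  ring

set_option maxHeartbeats 1000000 in
/-- With `y(x) = x - f x / f' x` and `t(x) = f(y(x))/f(x)`,
`(t(x) - c₂ (x - xs))/(x - xs)² → -3c₂² + 2c₃` as `x → xs`, `x ≠ xs`. -/
theorem t_ratio_second_order
    (D : Set ℝ) (hD : IsOpen D) (f : ℝ → ℝ) (xs : ℝ) (hxs : xs ∈ D)
    (hf : ContDiffOn ℝ 4 f D) (hf0 : f xs = 0) (hf1 : deriv f xs ≠ 0) :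
    Tendsto
      (fun x : ℝ =>
        (f (x - f x / deriv f x) / f x - c f xs 2 * (x - xs)) / (x - xs) ^ 2)
      (𝓝[≠] xs) (𝓝 (-3 * (c f xs 2) ^ 2 + 2 * c f xs 3)) := by
  have hcd : ContDiffAt ℝ 4 f xs := hf.contDiffAt (hD.mem_nhds hxs)
  have hc2 : deriv f xs * c f xs 2 = iteratedDeriv 2 f xs / 2 := by
    rw [c]; field_simp [Nat.factorial]; ring
  have hc3 : deriv f xs * c f xs 3 = iteratedDeriv 3 f xs / 6 := by
    rw [c]; field_simp [Nat.factorial]; ring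
  -- eventual derivative facts
  have h01 : ∀ᶠ y in 𝓝 xs, HasDerivAt f (deriv f y) y := by
    filter_upwards [derivs_nhds hD hxs hf (by norm_num : (0:ℕ) < 4)] with y hy
    simpa using hy
  have h12 : ∀ᶠ y in 𝓝 xs, HasDerivAt (deriv f) (iteratedDeriv 2 f y) y := by
    filter_upwards [derivs_nhds hD hxs hf (by norm_num : (1:ℕ) < 4)] with y hy
    simpa using hy
  have h23 : ∀ᶠ y in 𝓝 xs, HasDerivAt (iteratedDeriv 2 f) (iteratedDeriv 3 f y) y := by
    filter_upwards [derivs_nhds hD hxs hf (by norm_num : (2:ℕ) < 4)] with y hy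
    simpa using hy
  have hfc : ContinuousAt f xs := hcd.continuousAt
  have hf'c : ContinuousAt (deriv f) xs := h12.self_of_nhds.differentiableAt.continuousAt
  -- Peano-Taylor expansions
  have hA0 := peano3 h01 h12 h23.self_of_nhds
  have hB0 := peano2 h12 h23.self_of_nhds
  have hG0 := peano2 h01 h12.self_of_nhds
  rw [hf0] at hA0 hG0
  obtain ⟨A, hAdef⟩ : ∃ g : ℝ → ℝ, g = fun x =>
      (f x - 0 - deriv f xs * (x - xs) - iteratedDeriv 2 f xs / 2 * (x - xs) ^ 2
        - iteratedDeriv 3 f xs / 6 * (x - xs) ^ 3) / (x - xs) ^ 3 / deriv f xs := ⟨_, rfl⟩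
  obtain ⟨B, hBdef⟩ : ∃ g : ℝ → ℝ, g = fun x =>
      (deriv f x - deriv f xs - iteratedDeriv 2 f xs * (x - xs)
        - iteratedDeriv 3 f xs / 2 * (x - xs) ^ 2) / (x - xs) ^ 2 / deriv f xs := ⟨_, rfl⟩
  obtain ⟨G, hGdef⟩ : ∃ g : ℝ → ℝ, g = fun h : ℝ =>
      if h = 0 then 0
      else (f (xs + h) - deriv f xs * (h + c f xs 2 * h ^ 2)) / h ^ 2 := ⟨_, rfl⟩
  obtain ⟨u, hudef⟩ : ∃ g : ℝ → ℝ, g = fun x => (x - f x / deriv f x) - xs := ⟨_, rfl⟩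
  have hE : Tendsto (fun x => x - xs) (𝓝[≠] xs) (𝓝 0) := by
    have : Tendsto (fun x : ℝ => x - xs) (𝓝 xs) (𝓝 (xs - xs)) := tendsto_id.sub_const xs
    rw [sub_self] at this
    exact this.mono_left nhdsWithin_le_nhds
  have hA : Tendsto A (𝓝[≠] xs) (𝓝 0) := by
    rw [hAdef]
    have := hA0.div_const (deriv f xs)
    rw [zero_div] at this
    exact this
  have hB : Tendsto B (𝓝[≠] xs) (𝓝 0) := by
    rw [hBdef]
    have := hB0.div_const (deriv f xs)
    rw [zero_div] at this
    exact this
  -- G tends to 0 at 0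
  have hmap : Tendsto (fun h : ℝ => xs + h) (𝓝[≠] (0:ℝ)) (𝓝[≠] xs) := by
    rw [tendsto_nhdsWithin_iff]
    constructor
    · have : Tendsto (fun h : ℝ => xs + h) (𝓝 0) (𝓝 (xs + 0)) :=
        (tendsto_const_nhds.add tendsto_id)
      rw [add_zero] at this
      exact this.mono_left nhdsWithin_le_nhds
    · filter_upwards [self_mem_nhdsWithin] with h hh
      simp only [Set.mem_compl_iff, Set.mem_singleton_iff] at hh ⊢
      intro hcon
      exact hh (by linarith)
  have hGpunct : Tendsto G (𝓝[≠] (0:ℝ)) (𝓝 0) := by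
    have hcomp := hG0.comp hmap
    refine hcomp.congr' ?_
    filter_upwards [self_mem_nhdsWithin] with h hh
    have h0 : (h : ℝ) ≠ 0 := hh
    simp only [Function.comp_apply, hGdef, if_neg h0, add_sub_cancel_left]
    congr 1
    linear_combination (h ^ 2) * hc2
  have hG : Tendsto G (𝓝 (0:ℝ)) (𝓝 0) := by
    have hpure : Tendsto G (pure (0:ℝ)) (𝓝 0) := by
      rw [tendsto_pure_left]
      intro s hs
      simpa [hGdef] using mem_of_mem_nhds hs
    have hsup := tendsto_sup.mpr ⟨hGpunct, hpure⟩
    rwa [nhdsNE_sup_pure] at hsup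
  have hu : Tendsto u (𝓝[≠] xs) (𝓝 0) := by
    rw [hudef]
    have h1 : Tendsto (fun x => x - f x / deriv f x) (𝓝 xs) (𝓝 (xs - f xs / deriv f xs)) :=
      tendsto_id.sub (hfc.tendsto.div hf'c.tendsto hf1)
    rw [hf0, zero_div, sub_zero] at h1
    have h2 : Tendsto (fun x => (x - f x / deriv f x) - xs) (𝓝 xs) (𝓝 (xs - xs)) :=
      h1.sub_const xs
    rw [sub_self] at h2
    exact h2.mono_left nhdsWithin_le_nhds
  have hC : Tendsto (fun x => G (u x)) (𝓝[≠] xs) (𝓝 0) := hG.comp hu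
  -- the main limit via the explicit rational function
  have hphi := phi_tendsto (c2 := c f xs 2) (c3 := c f xs 3) hf1 hE hA hB hC
  refine hphi.congr' ?_
  -- eventual equality
  have hf'ne : ∀ᶠ x in 𝓝[≠] xs, deriv f x ≠ 0 :=
    (hf'c.eventually_ne hf1).filter_mono nhdsWithin_le_nhds
  have hPt : Tendsto (fun x => 1 + c f xs 2 * (x - xs) + (c f xs 3 + A x) * (x - xs) ^ 2)
      (𝓝[≠] xs) (𝓝 1) := by
    have : Tendsto (fun x => 1 + c f xs 2 * (x - xs) + (c f xs 3 + A x) * (x - xs) ^ 2)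
        (𝓝[≠] xs) (𝓝 (1 + c f xs 2 * 0 + (c f xs 3 + 0) * 0 ^ 2)) :=
      (tendsto_const_nhds.add (hE.const_mul _)).add
        ((tendsto_const_nhds.add hA).mul (hE.pow 2))
    simpa using this
  have hQt : Tendsto (fun x => 1 + 2 * c f xs 2 * (x - xs) + (3 * c f xs 3 + B x) * (x - xs) ^ 2)
      (𝓝[≠] xs) (𝓝 1) := by
    have : Tendsto (fun x => 1 + 2 * c f xs 2 * (x - xs) + (3 * c f xs 3 + B x) * (x - xs) ^ 2)
        (𝓝[≠] xs) (𝓝 (1 + 2 * c f xs 2 * 0 + (3 * c f xs 3 + 0) * 0 ^ 2)) :=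
      (tendsto_const_nhds.add (hE.const_mul _)).add
        ((tendsto_const_nhds.add hB).mul (hE.pow 2))
    simpa using this
  filter_upwards [self_mem_nhdsWithin, hf'ne, hPt.eventually_ne one_ne_zero,
    hQt.eventually_ne one_ne_zero] with x hx hf'x hP hQ
  have he0 : x - xs ≠ 0 := sub_ne_zero.mpr hx
  -- identities
  have hfx : f x = deriv f xs * (x - xs) *
      (1 + c f xs 2 * (x - xs) + (c f xs 3 + A x) * (x - xs) ^ 2) := by
    have hAx : A x * ((x - xs) ^ 3) * deriv f xs
        = f x - 0 - deriv f xs * (x - xs) - iteratedDeriv 2 f xs / 2 * (x - xs) ^ 2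
          - iteratedDeriv 3 f xs / 6 * (x - xs) ^ 3 := by
      rw [hAdef]
      field_simp
    linear_combination -hAx - (x - xs) ^ 2 * hc2 - (x - xs) ^ 3 * hc3
  have hf'x2 : deriv f x = deriv f xs *
      (1 + 2 * c f xs 2 * (x - xs) + (3 * c f xs 3 + B x) * (x - xs) ^ 2) := by
    have hBx : B x * ((x - xs) ^ 2) * deriv f xs
        = deriv f x - deriv f xs - iteratedDeriv 2 f xs * (x - xs)
          - iteratedDeriv 3 f xs / 2 * (x - xs) ^ 2 := by
      rw [hBdef]
      field_simp
    linear_combination -hBx - 2 * (x - xs) * hc2 - 3 * (x - xs) ^ 2 * hc3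
  have hfy : ∀ h : ℝ, f (xs + h)
      = deriv f xs * (h + c f xs 2 * h ^ 2) + G h * h ^ 2 := by
    intro h
    by_cases h0 : h = 0
    · simp [hGdef, h0, hf0]
    · rw [hGdef]
      simp only [if_neg h0]
      field_simp
      ring
  have hyu : x - f x / deriv f x = xs + u x := by rw [hudef]; ring
  have hfyx : f (x - f x / deriv f x)
      = deriv f xs * (u x + c f xs 2 * u x ^ 2) + G (u x) * u x ^ 2 := by
    rw [hyu, hfy]
  have huval : u x = (x - xs) *
      ((1 + 2 * c f xs 2 * (x - xs) + (3 * c f xs 3 + B x) * (x - xs) ^ 2)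
        - (1 + c f xs 2 * (x - xs) + (c f xs 3 + A x) * (x - xs) ^ 2))
      / (1 + 2 * c f xs 2 * (x - xs) + (3 * c f xs 3 + B x) * (x - xs) ^ 2) := by
    rw [hudef]
    simp only
    have hd : f x / deriv f x = (x - xs) * (1 + c f xs 2 * (x - xs) + (c f xs 3 + A x) * (x - xs) ^ 2)
        / (1 + 2 * c f xs 2 * (x - xs) + (3 * c f xs 3 + B x) * (x - xs) ^ 2) := by
      rw [div_eq_div_iff hf'x hQ, hfx, hf'x2]; ring
    rw [hd, eq_div_iff hQ, sub_mul, sub_mul, div_mul_cancel₀ _ hQ]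
    ring
  -- final algebraic identity
  have hkey := key_algebra (c f xs 2) (c f xs 3) (deriv f xs) (x - xs) (A x) (B x)
    (G (u x)) (u x) _ he0 hf1 hP hQ huval rfl
  rw [hfyx, hfx]
  exact hkey.symm
end

section
/- Let f : ℝ → ℝ be five times continuously differentiable on an open set D, with a simple zero x* ∈ D, and let G : ℝ → ℝ be three times continuously differentiable with G(0) = 1, G'(0) = 2, G''(0) = 10. Define for x near x*, x ≠ x*: y(x) = x − f(x)/f'(x), z(x) = y(x) − G(f(y(x))/f(x))·f(y(x))/f'(x), and u(x) = f(z(x))/f(x). Then u(x)/(x − x*)³ tends to −c₂c₃ as x → x*. -/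
open Filter Topology Finset

private lemma peano : ∀ (n : ℕ) (g : ℝ → ℝ) (a : ℝ) (s : Set ℝ), IsOpen s → a ∈ s →
    ContDiffOn ℝ n g s →
    Tendsto (fun h : ℝ =>
      (g (a + h) - ∑ k ∈ Finset.range (n+1),
        iteratedDeriv k g a * h^k / (Nat.factorial k)) / h^n)
      (𝓝[≠] (0:ℝ)) (𝓝 0) := by
  intro n
  induction n with
  | zero =>
    intro g a s hs ha hg
    have hc : ContinuousAt g a := hg.continuousOn.continuousAt (hs.mem_nhds ha)
    have h1 : Tendsto (fun h : ℝ => g (a + h)) (𝓝 0) (𝓝 (g a)) := by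
      have h0 : Tendsto (fun h : ℝ => a + h) (𝓝 (0:ℝ)) (𝓝 a) := by
        simpa using (tendsto_id : Tendsto id (𝓝 (0:ℝ)) (𝓝 0)).const_add a
      exact hc.tendsto.comp h0
    have h2 : Tendsto (fun h : ℝ => g (a + h) - g a) (𝓝 (0:ℝ)) (𝓝 0) := by
      simpa using h1.sub (tendsto_const_nhds (α := ℝ) (x := g a))
    refine Tendsto.congr (fun h => ?_) (h2.mono_left nhdsWithin_le_nhds)
    simp
  | succ n IH =>
    intro g a s hs ha hg
    have hgd : ContDiffOn ℝ n (deriv g) s := hg.deriv_of_isOpen hs (by norm_cast)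
    have hadd : Tendsto (fun h : ℝ => a + h) (𝓝 (0:ℝ)) (𝓝 a) := by
      simpa using (tendsto_id : Tendsto id (𝓝 (0:ℝ)) (𝓝 0)).const_add a
    have hmem : ∀ᶠ h : ℝ in 𝓝 (0:ℝ), a + h ∈ s := hadd.eventually (hs.eventually_mem ha)
    -- derivative of the shifted function
    have hdg : ∀ᶠ h : ℝ in 𝓝 (0:ℝ), HasDerivAt (fun h : ℝ => g (a + h)) (deriv g (a + h)) h := by
      filter_upwards [hmem] with h hh
      have hdiff : DifferentiableAt ℝ g (a + h) :=
        (hg.differentiableOn (by simp)).differentiableAt (hs.mem_nhds hh)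
      have := hdiff.hasDerivAt.comp h ((hasDerivAt_id h).const_add a)
      simpa [Function.comp_def] using this
    -- derivative of the Taylor polynomial
    have hpoly : ∀ h : ℝ, HasDerivAt
        (fun h : ℝ => ∑ k ∈ Finset.range (n+2), iteratedDeriv k g a * h^k / (Nat.factorial k))
        (∑ k ∈ Finset.range (n+1), iteratedDeriv (k+1) g a * h^k / (Nat.factorial k)) h := by
      intro h
      have hterm : ∀ k : ℕ, HasDerivAt
          (fun x : ℝ => iteratedDeriv k g a * x^k / (Nat.factorial k))
          (iteratedDeriv k g a * (k * h^(k-1)) / (Nat.factorial k)) h := by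
        intro k
        exact ((hasDerivAt_pow k h).const_mul (iteratedDeriv k g a)).div_const _
      have hsum := HasDerivAt.fun_sum (fun k (_ : k ∈ Finset.range (n+2)) => hterm k)
      refine hsum.congr_deriv (Eq.symm ?_)
      conv_rhs => rw [Finset.sum_range_succ']
      norm_num
      refine Finset.sum_congr rfl fun k _ => ?_
      have hk : (Nat.factorial k : ℝ) ≠ 0 := by exact_mod_cast (Nat.factorial_pos k).ne'
      rw [Nat.factorial_succ]
      push_cast
      field_simp
    have hne : ∀ᶠ h : ℝ in 𝓝[≠] (0:ℝ), h ≠ 0 := by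
      filter_upwards [self_mem_nhdsWithin] with h hh using hh
    -- L'Hôpital
    have happ := HasDerivAt.lhopital_zero_nhdsNE
      (f := fun h : ℝ => g (a + h) - ∑ k ∈ Finset.range (n+2),
          iteratedDeriv k g a * h^k / (Nat.factorial k))
      (f' := fun h : ℝ => deriv g (a + h) - ∑ k ∈ Finset.range (n+1),
          iteratedDeriv (k+1) g a * h^k / (Nat.factorial k))
      (g := fun h : ℝ => h^(n+1)) (g' := fun h : ℝ => ((n:ℝ)+1) * h^n) (a := (0:ℝ)) (l := 𝓝 (0:ℝ))
      ?_ ?_ ?_ ?_ ?_ ?_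
    · exact happ
    · filter_upwards [hdg.filter_mono nhdsWithin_le_nhds] with h hh
      exact hh.sub (hpoly h)
    · filter_upwards with h
      have := hasDerivAt_pow (n+1) h
      simpa using this
    · filter_upwards [hne] with h hh
      exact mul_ne_zero (by positivity) (pow_ne_zero _ hh)
    · -- numerator tends to 0
      have hcont : Tendsto (fun h : ℝ => g (a + h)) (𝓝 (0:ℝ)) (𝓝 (g a)) :=
        (hg.continuousOn.continuousAt (hs.mem_nhds ha)).tendsto.comp hadd
      have hcp : Tendsto (fun h : ℝ => ∑ k ∈ Finset.range (n+2),
          iteratedDeriv k g a * h^k / (Nat.factorial k)) (𝓝 (0:ℝ)) (𝓝 (g a)) := by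
        have hcc : Continuous (fun h : ℝ => ∑ k ∈ Finset.range (n+2),
            iteratedDeriv k g a * h^k / (Nat.factorial k)) := by
          refine continuous_finset_sum _ fun k _ => ?_
          exact (continuous_const.mul (continuous_pow k)).div_const _
        have := hcc.tendsto 0
        convert this using 2
        rw [Finset.sum_range_succ']
        simp [zero_pow]
      have := hcont.sub hcp
      rw [sub_self] at this
      exact this.mono_left nhdsWithin_le_nhds
    · have := (continuous_pow (n+1)).tendsto (0:ℝ)
      rw [zero_pow (Nat.succ_ne_zero n)] at this
      exact this.mono_left nhdsWithin_le_nhds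
    · -- ratio of derivatives
      have IH' := IH (deriv g) a s hs ha hgd
      simp only [← iteratedDeriv_succ'] at IH'
      have hmul := IH'.const_mul (1/((n:ℝ)+1))
      rw [mul_zero] at hmul
      refine Tendsto.congr' ?_ hmul
      filter_upwards [hne] with h hh
      have hn1 : ((n:ℝ)+1) ≠ 0 := by positivity
      field_simp

/-- The second substep `z` of the method. -/
noncomputable def zmap (f G : ℝ → ℝ) (x : ℝ) : ℝ :=
  let y := x - f x / deriv f x
  y - G (f y / f x) * (f y / deriv f x)

set_option maxHeartbeats 4000000 in
/-- With `u(x) = f(z(x))/f(x)`, `u(x)/(x - xs)³ → -c₂ c₃` as `x → xs`, `x ≠ xs`. -/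
theorem u_ratio_constant
    (D : Set ℝ) (hD : IsOpen D) (f : ℝ → ℝ) (xs : ℝ) (hxs : xs ∈ D)
    (hf : ContDiffOn ℝ 5 f D) (hf0 : f xs = 0) (hf1 : deriv f xs ≠ 0)
    (G : ℝ → ℝ) (hG : ContDiff ℝ 3 G) (hG0 : G 0 = 1) (hG1 : deriv G 0 = 2)
    (hG2 : iteratedDeriv 2 G 0 = 10) :
    Tendsto (fun x : ℝ => (f (zmap f G x) / f x) / (x - xs) ^ 3) (𝓝[≠] xs)
      (𝓝 (-(c f xs 2) * c f xs 3)) := by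
  set A := deriv f xs with hAdef
  set c2 := c f xs 2 with hc2def
  set c3 := c f xs 3 with hc3def
  set c4 := c f xs 4 with hc4def
  have hA : A ≠ 0 := hf1
  have hiter : ∀ k : ℕ, iteratedDeriv k f xs = c f xs k * ((Nat.factorial k : ℝ) * A) := by
    intro k
    have hk : ((Nat.factorial k : ℝ) * A) ≠ 0 :=
      mul_ne_zero (by exact_mod_cast (Nat.factorial_pos k).ne') hA
    unfold c
    rw [← hAdef, div_mul_cancel₀ _ hk]
  have hi2 : iteratedDeriv 2 f xs = c2 * (2 * A) := by
    have h := hiter 2; rw [← hc2def] at h; norm_num [Nat.factorial] at h; exact h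
  have hi3 : iteratedDeriv 3 f xs = c3 * (6 * A) := by
    have h := hiter 3; rw [← hc3def] at h; norm_num [Nat.factorial] at h; exact h
  have hi4 : iteratedDeriv 4 f xs = c4 * (24 * A) := by
    have h := hiter 4; rw [← hc4def] at h; norm_num [Nat.factorial] at h; exact h
  have hi1 : iteratedDeriv 1 f xs = A := by rw [iteratedDeriv_one, ← hAdef]
  -- the three remainder functions
  set E1 : ℝ → ℝ := fun t => (f (xs + t) - A*(t + c2*t^2 + c3*t^3 + c4*t^4)) / (A*t^4)
    with hE1def
  set E2 : ℝ → ℝ := fun t =>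
      (deriv f (xs + t) - A*(1 + 2*c2*t + 3*c3*t^2 + 4*c4*t^3)) / (A*t^3) with hE2def
  set Dl : ℝ → ℝ := fun t => (G t - (1 + 2*t + 5*t^2)) / t^2 with hDldef
  have idE1 : ∀ t : ℝ, f (xs + t) = A*(t + c2*t^2 + c3*t^3 + c4*t^4 + t^4 * E1 t) := by
    intro t
    by_cases ht : t = 0
    · simp [ht, hf0]
    · rw [hE1def]
      field_simp
      ring
  have idE2 : ∀ t : ℝ, deriv f (xs + t)
      = A*(1 + 2*c2*t + 3*c3*t^2 + 4*c4*t^3 + t^3 * E2 t) := by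
    intro t
    by_cases ht : t = 0
    · simp [ht, ← hAdef]
    · rw [hE2def]
      field_simp
      ring
  have idDl : ∀ t : ℝ, G t = 1 + 2*t + 5*t^2 + t^2 * Dl t := by
    intro t
    by_cases ht : t = 0
    · simp [ht, hG0]
    · rw [hDldef]
      field_simp
      ring
  -- Taylor sums
  have hsum1 : ∀ t : ℝ, ∑ k ∈ Finset.range (4+1), iteratedDeriv k f xs * t^k / (Nat.factorial k)
      = A*(t + c2*t^2 + c3*t^3 + c4*t^4) := by
    intro t
    rw [Finset.sum_range_succ, Finset.sum_range_succ, Finset.sum_range_succ,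
      Finset.sum_range_succ, Finset.sum_range_one]
    rw [iteratedDeriv_zero, hi1, hi2, hi3, hi4, hf0]
    norm_num [Nat.factorial]
    ring
  have hsum2 : ∀ t : ℝ, ∑ k ∈ Finset.range (3+1),
      iteratedDeriv k (deriv f) xs * t^k / (Nat.factorial k)
      = A*(1 + 2*c2*t + 3*c3*t^2 + 4*c4*t^3) := by
    intro t
    simp only [← iteratedDeriv_succ']
    rw [Finset.sum_range_succ, Finset.sum_range_succ, Finset.sum_range_succ,
      Finset.sum_range_one]
    rw [hi1, hi2, hi3, hi4]
    norm_num [Nat.factorial]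
    ring
  have hsumG : ∀ t : ℝ, ∑ k ∈ Finset.range (2+1),
      iteratedDeriv k G 0 * t^k / (Nat.factorial k) = 1 + 2*t + 5*t^2 := by
    intro t
    rw [Finset.sum_range_succ, Finset.sum_range_succ, Finset.sum_range_one]
    rw [iteratedDeriv_zero, iteratedDeriv_one, hG0, hG1, hG2]
    norm_num [Nat.factorial]
    ring
  -- limits of remainder functions
  have TE1 : Tendsto E1 (𝓝 0) (𝓝 0) := by
    have key : Tendsto E1 (𝓝[≠] (0:ℝ) ⊔ pure 0) (𝓝 0) := by
      rw [tendsto_sup]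
      constructor
      · have hp := peano 4 f xs D hD hxs (hf.of_le (by norm_cast))
        have hp' := hp.div_const A
        rw [zero_div] at hp'
        refine Tendsto.congr (fun t => ?_) hp'
        rw [hsum1, hE1def, div_div, mul_comm (t^4) A]
      · have h0 : E1 0 = 0 := by simp [hE1def, hf0]
        simpa [h0] using tendsto_pure_nhds E1 0
    rwa [nhdsNE_sup_pure] at key
  have TE2 : Tendsto E2 (𝓝 0) (𝓝 0) := by
    have hfd : ContDiffOn ℝ 3 (deriv f) D := hf.deriv_of_isOpen hD (by norm_cast)
    have key : Tendsto E2 (𝓝[≠] (0:ℝ) ⊔ pure 0) (𝓝 0) := by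
      rw [tendsto_sup]
      constructor
      · have hp := peano 3 (deriv f) xs D hD hxs hfd
        have hp' := hp.div_const A
        rw [zero_div] at hp'
        refine Tendsto.congr (fun t => ?_) hp'
        rw [hsum2, hE2def, div_div, mul_comm (t^3) A]
      · have h0 : E2 0 = 0 := by simp [hE2def, ← hAdef]
        simpa [h0] using tendsto_pure_nhds E2 0
    rwa [nhdsNE_sup_pure] at key
  have TDl : Tendsto Dl (𝓝 0) (𝓝 0) := by
    have key : Tendsto Dl (𝓝[≠] (0:ℝ) ⊔ pure 0) (𝓝 0) := by
      rw [tendsto_sup]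
      constructor
      · have hp := peano 2 G 0 Set.univ isOpen_univ (Set.mem_univ 0)
          ((hG.of_le (by norm_cast)).contDiffOn)
        simp only [zero_add] at hp
        refine Tendsto.congr (fun t => ?_) hp
        rw [hsumG, hDldef]
      · have h0 : Dl 0 = 0 := by simp [hDldef, hG0]
        simpa [h0] using tendsto_pure_nhds Dl 0
    rwa [nhdsNE_sup_pure] at key
  clear_value A c2 c3 c4 E1 E2 Dl
  -- basic limits along the punctured neighbourhood
  have lhh : Tendsto (fun x : ℝ => x - xs) (𝓝[≠] xs) (𝓝 0) := by
    have h : Tendsto (fun x : ℝ => x - xs) (𝓝 xs) (𝓝 (xs - xs)) :=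
      Continuous.tendsto (by fun_prop) xs
    rw [sub_self] at h
    exact h.mono_left nhdsWithin_le_nhds
  have le1 : Tendsto (fun x : ℝ => E1 (x - xs)) (𝓝[≠] xs) (𝓝 0) := TE1.comp lhh
  have le2 : Tendsto (fun x : ℝ => E2 (x - xs)) (𝓝[≠] xs) (𝓝 0) := TE2.comp lhh
  -- the auxiliary functions
  set NN : ℝ → ℝ := fun x => c2 + 2*c3*(x - xs) + 3*c4*(x - xs)^2
      + (x - xs)^2*(E2 (x - xs) - E1 (x - xs)) with hNN
  set QQ : ℝ → ℝ := fun x => 1 + 2*c2*(x - xs) + 3*c3*(x - xs)^2 + 4*c4*(x - xs)^3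
      + (x - xs)^3*E2 (x - xs) with hQQ
  set P1 : ℝ → ℝ := fun x => 1 + c2*(x - xs) + c3*(x - xs)^2 + c4*(x - xs)^3
      + (x - xs)^3*E1 (x - xs) with hP1
  set Q2 : ℝ → ℝ := fun x => 3*c3 + 4*c4*(x - xs) + (x - xs)*E2 (x - xs) with hQ2
  set psi : ℝ → ℝ := fun x => 3*c2^2 - 2*c3
      + (x - xs)*(-3*c4 + 4*c2*c3 + 2*c2^3 - E2 (x - xs) + E1 (x - xs))
      + (x - xs)^2*(5*c2*c4 + 5*c2^2*c3 + c2*E2 (x - xs) + c2*E1 (x - xs))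
      + (x - xs)^3*(3*c2*c3^2 + 6*c2^2*c4 + c2^2*E2 (x - xs) + 2*c2^2*E1 (x - xs))
      + (x - xs)^4*(7*c2*c3*c4 + c2*c3*E2 (x - xs) + 3*c2*c3*E1 (x - xs))
      + (x - xs)^5*(4*c2*c4^2 + c2*c4*E2 (x - xs) + 4*c2*c4*E1 (x - xs)
          + c2*E1 (x - xs)*E2 (x - xs)) with hpsi
  set ey : ℝ → ℝ := fun x => (x - xs)^2 * NN x / QQ x with hey
  set W : ℝ → ℝ := fun x => c3 + c4*ey x + ey x * E1 (ey x) with hW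
  set Vv : ℝ → ℝ := fun x => 1 + c2*ey x + (ey x)^2 * W x with hVv
  set T : ℝ → ℝ := fun x => NN x * Vv x / (QQ x * P1 x) with hT
  set S : ℝ → ℝ := fun x => (psi x - c2*(x - xs)*(NN x)^2/QQ x
      - (x - xs)^3*(NN x)^3*W x/(QQ x)^2) / (QQ x * P1 x) with hS
  set tt : ℝ → ℝ := fun x => (x - xs) * T x with htt
  set RR : ℝ → ℝ := fun x => c2*NN x/QQ x + (x - xs)^2*(NN x)^2*W x/(QQ x)^2 with hRR
  set K : ℝ → ℝ := fun x => 2*S x + Q2 x - 5*(T x)^2 - (T x)^2*Dl (tt x)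
      - G (tt x)*RR x with hK
  set ez : ℝ → ℝ := fun x => (x - xs)^4*NN x*K x/(QQ x)^2 with hez
  set V2 : ℝ → ℝ := fun x => 1 + c2*ez x + c3*(ez x)^2 + c4*(ez x)^3
      + (ez x)^3*E1 (ez x) with hV2
  clear_value NN QQ P1 Q2 psi ey W Vv T S tt RR K ez V2
  -- limits of the auxiliary functions
  have lN : Tendsto NN (𝓝[≠] xs) (𝓝 c2) := by
    rw [hNN]
    have h := ((tendsto_const_nhds (x := c2)).add
        ((tendsto_const_nhds (x := 2*c3)).mul lhh)).add
        ((tendsto_const_nhds (x := 3*c4)).mul (lhh.pow 2)) |>.add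
        ((lhh.pow 2).mul (le2.sub le1))
    convert h using 2
    norm_num
  have lQ : Tendsto QQ (𝓝[≠] xs) (𝓝 1) := by
    rw [hQQ]
    have h := (((tendsto_const_nhds (x := (1:ℝ))).add
        ((tendsto_const_nhds (x := 2*c2)).mul lhh)).add
        ((tendsto_const_nhds (x := 3*c3)).mul (lhh.pow 2))).add
        ((tendsto_const_nhds (x := 4*c4)).mul (lhh.pow 3)) |>.add
        ((lhh.pow 3).mul le2)
    convert h using 2
    norm_num
  have lP1 : Tendsto P1 (𝓝[≠] xs) (𝓝 1) := by
    rw [hP1]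
    have h := (((tendsto_const_nhds (x := (1:ℝ))).add
        ((tendsto_const_nhds (x := c2)).mul lhh)).add
        ((tendsto_const_nhds (x := c3)).mul (lhh.pow 2))).add
        ((tendsto_const_nhds (x := c4)).mul (lhh.pow 3)) |>.add
        ((lhh.pow 3).mul le1)
    convert h using 2
    norm_num
  have lQ2 : Tendsto Q2 (𝓝[≠] xs) (𝓝 (3*c3)) := by
    rw [hQ2]
    have h := ((tendsto_const_nhds (x := 3*c3)).add
        ((tendsto_const_nhds (x := 4*c4)).mul lhh)).add (lhh.mul le2)
    convert h using 2
    norm_num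
  have lpsi : Tendsto psi (𝓝[≠] xs) (𝓝 (3*c2^2 - 2*c3)) := by
    rw [hpsi]
    have h := (((((tendsto_const_nhds (x := 3*c2^2 - 2*c3)).add
        (lhh.mul ((((tendsto_const_nhds (x := -3*c4 + 4*c2*c3 + 2*c2^3)).sub le2)).add le1))).add
        ((lhh.pow 2).mul (((tendsto_const_nhds (x := 5*c2*c4 + 5*c2^2*c3)).add
          ((tendsto_const_nhds (x := c2)).mul le2)).add ((tendsto_const_nhds (x := c2)).mul le1)))).add
        ((lhh.pow 3).mul (((tendsto_const_nhds (x := 3*c2*c3^2 + 6*c2^2*c4)).add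
          ((tendsto_const_nhds (x := c2^2)).mul le2)).add ((tendsto_const_nhds (x := 2*c2^2)).mul le1)))).add
        ((lhh.pow 4).mul (((tendsto_const_nhds (x := 7*c2*c3*c4)).add
          ((tendsto_const_nhds (x := c2*c3)).mul le2)).add ((tendsto_const_nhds (x := 3*c2*c3)).mul le1)))).add
        ((lhh.pow 5).mul ((((tendsto_const_nhds (x := 4*c2*c4^2)).add
          ((tendsto_const_nhds (x := c2*c4)).mul le2)).add ((tendsto_const_nhds (x := 4*c2*c4)).mul le1)).add
          (((tendsto_const_nhds (x := c2)).mul le1).mul le2)))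
    convert h using 2
    norm_num
  have ley : Tendsto ey (𝓝[≠] xs) (𝓝 0) := by
    rw [hey]
    have h := ((lhh.pow 2).mul lN).div lQ one_ne_zero
    convert h using 2
    all_goals norm_num
  have lW : Tendsto W (𝓝[≠] xs) (𝓝 c3) := by
    rw [hW]
    have h := ((tendsto_const_nhds (x := c3)).add
        ((tendsto_const_nhds (x := c4)).mul ley)).add (ley.mul (TE1.comp ley))
    convert h using 2
    all_goals norm_num
  have lVv : Tendsto Vv (𝓝[≠] xs) (𝓝 1) := by
    rw [hVv]
    have h := ((tendsto_const_nhds (x := (1:ℝ))).add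
        ((tendsto_const_nhds (x := c2)).mul ley)).add ((ley.pow 2).mul lW)
    convert h using 2
    norm_num
  have lT : Tendsto T (𝓝[≠] xs) (𝓝 c2) := by
    rw [hT]
    have h := (lN.mul lVv).div (lQ.mul lP1) (by norm_num)
    convert h using 2
    all_goals norm_num
  have lS : Tendsto S (𝓝[≠] xs) (𝓝 (3*c2^2 - 2*c3)) := by
    rw [hS]
    have h := ((lpsi.sub ((((tendsto_const_nhds (x := c2)).mul lhh).mul (lN.pow 2)).div lQ
        one_ne_zero)).sub ((((lhh.pow 3).mul (lN.pow 3)).mul lW).div (lQ.pow 2)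
        (by norm_num))).div (lQ.mul lP1) (by norm_num)
    convert h using 2
    all_goals norm_num
  have ltt : Tendsto tt (𝓝[≠] xs) (𝓝 0) := by
    rw [htt]
    have h := lhh.mul lT
    convert h using 2
    norm_num
  have ldd : Tendsto (fun x => Dl (tt x)) (𝓝[≠] xs) (𝓝 0) := TDl.comp ltt
  have lGt : Tendsto (fun x => G (tt x)) (𝓝[≠] xs) (𝓝 1) := by
    have h := (hG.continuous.tendsto 0).comp ltt
    rwa [hG0] at h
  have lRR : Tendsto RR (𝓝[≠] xs) (𝓝 (c2*c2)) := by
    rw [hRR]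
    have h := (((tendsto_const_nhds (x := c2)).mul lN).div lQ one_ne_zero).add
        ((((lhh.pow 2).mul (lN.pow 2)).mul lW).div (lQ.pow 2) (by norm_num))
    convert h using 2
    all_goals norm_num
  have lK : Tendsto K (𝓝[≠] xs) (𝓝 (-c3)) := by
    rw [hK]
    have h := ((((((tendsto_const_nhds (x := (2:ℝ))).mul lS).add lQ2).sub
        ((tendsto_const_nhds (x := (5:ℝ))).mul (lT.pow 2))).sub
        ((lT.pow 2).mul ldd)).sub (lGt.mul lRR))
    convert h using 2
    ring
  have lez : Tendsto ez (𝓝[≠] xs) (𝓝 0) := by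
    rw [hez]
    have h := (((lhh.pow 4).mul lN).mul lK).div (lQ.pow 2) (by norm_num)
    convert h using 2
    all_goals norm_num
  have lV2 : Tendsto V2 (𝓝[≠] xs) (𝓝 1) := by
    rw [hV2]
    have h := (((tendsto_const_nhds (x := (1:ℝ))).add
        ((tendsto_const_nhds (x := c2)).mul lez)).add
        ((tendsto_const_nhds (x := c3)).mul (lez.pow 2))).add
        ((tendsto_const_nhds (x := c4)).mul (lez.pow 3)) |>.add
        ((lez.pow 3).mul (TE1.comp lez))
    convert h using 2
    all_goals norm_num
  have lPhi : Tendsto (fun x => NN x * K x * V2 x / ((QQ x)^2 * P1 x)) (𝓝[≠] xs)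
      (𝓝 (-c2 * c3)) := by
    have h := ((lN.mul lK).mul lV2).div ((lQ.pow 2).mul lP1) (by norm_num)
    convert h using 2
    · rfl
    · ring
  -- eventual nonvanishing
  have evx : ∀ᶠ x in 𝓝[≠] xs, x ≠ xs := by
    filter_upwards [self_mem_nhdsWithin] with x hx
    simpa using hx
  have evQ : ∀ᶠ x in 𝓝[≠] xs, QQ x ≠ 0 := lQ.eventually_ne one_ne_zero
  have evP1 : ∀ᶠ x in 𝓝[≠] xs, P1 x ≠ 0 := lP1.eventually_ne one_ne_zero
  refine Tendsto.congr' ?_ lPhi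
  filter_upwards [evx, evQ, evP1] with x hx hQ0 hP10
  have h0 : x - xs ≠ 0 := sub_ne_zero.mpr hx
  have idfx : f x = A * ((x - xs) * P1 x) := by
    have h1 := idE1 (x - xs)
    rw [show xs + (x - xs) = x by ring] at h1
    rw [h1]; simp only [hP1]; ring
  have hfx0 : f x ≠ 0 := by rw [idfx]; exact mul_ne_zero hA (mul_ne_zero h0 hP10)
  have iddf : deriv f x = A * QQ x := by
    have h1 := idE2 (x - xs)
    rw [show xs + (x - xs) = x by ring] at h1
    rw [h1]; simp only [hQQ]
  have hdf0 : deriv f x ≠ 0 := by rw [iddf]; exact mul_ne_zero hA hQ0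
  set yx := x - f x / deriv f x with hyx
  clear_value yx
  have heyx : yx - xs = ey x := by
    rw [hyx, idfx, iddf]
    simp only [hey]
    field_simp [hA, hQ0, hP10, h0]
    simp only [hNN, hQQ, hP1]
    ring
  have hxye : xs + ey x = yx := by rw [← heyx]; ring
  have idfy : f yx = A * (ey x * Vv x) := by
    have h1 := idE1 (ey x)
    rw [hxye] at h1
    rw [h1]; simp only [hVv, hW]; ring
  have idtt : f yx / f x = tt x := by
    rw [idfy, idfx]
    simp only [htt, hT, hey]
    field_simp [hA, hQ0, hP10, h0]
  have b0 : c2 * QQ x * P1 x - NN x = (x - xs) * psi x := by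
    simp only [hQQ, hP1, hNN, hpsi]; ring
  have hpsix : psi x = (c2 * QQ x * P1 x - NN x) / (x - xs) := by
    rw [eq_div_iff h0]
    linear_combination -b0
  have b2 : c2 - T x = (x - xs) * S x := by
    simp only [hT, hS, hVv, hey]
    rw [hpsix]
    field_simp [hQ0, hP10, h0]
    ring
  have bQ : QQ x = 1 + 2*c2*(x - xs) + (x - xs)^2*Q2 x := by
    simp only [hQQ, hQ2]; ring
  have bV : Vv x = 1 + (x - xs)^2*RR x := by
    simp only [hVv, hRR, hey]
    field_simp [hQ0]
    ring
  have Bid : QQ x - G (tt x)*Vv x = (x - xs)^2*K x := by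
    simp only [hK]
    rw [idDl (tt x)]
    simp only [htt]
    rw [bV, bQ]
    linear_combination 2*(x - xs)*b2
  have hz : zmap f G x = yx - G (f yx / f x) * (f yx / deriv f x) := by
    rw [hyx]; rfl
  have stepC : zmap f G x - xs = ez x := by
    rw [hz, idtt, idfy, iddf, ← hxye]
    have e1 : xs + ey x - G (tt x)*(A*(ey x*Vv x)/(A*QQ x)) - xs
        = ey x*(QQ x - G (tt x)*Vv x)/QQ x := by
      field_simp
      ring
    rw [e1, Bid]
    simp only [hey, hez]
    field_simp [hQ0, h0]
  have hxze : xs + ez x = zmap f G x := by rw [← stepC]; ring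
  have stepD : f (zmap f G x) = A*(ez x*V2 x) := by
    have h1 := idE1 (ez x)
    rw [hxze] at h1
    rw [h1]; simp only [hV2]; ring
  rw [stepD, idfx]
  simp only [hez]
  field_simp [hA, hQ0, hP10, h0]
end
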